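/- arXiv:2101.08384 — 5 statements merged into one kernel-verified Lean document; each statement's English description precedes it below -/
import Mathlib

section
/- Let n ≥ 3, ε ∈ (0,1), r > 0, and let K ⊂ ℝⁿ be an origin-symmetric convex body such that (1−ε) r B₂ⁿ ⊆ K ⊆ (1+ε) r B₂ⁿ and such that H^{n−1}(∂K) = c_n ∫_{S^{n−1}} (vol_{n−1}(K ∩ θ⊥))^{n+1} dm_{n−1}(θ), where c_n > 0 is the constant determined by requiring the same identity for the unit ball, i.e., c_n = H^{n−1}(S^{n−1}) / ∫_{S^{n−1}} (vol_{n−1}(B₂ⁿ ∩ θ⊥))^{n+1} dm_{n−1}(θ). Then (1−ε)/(1+ε)^{n+1} ≤ rⁿ ≤ (1+ε)/(1−ε)^{n+1}. -/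
/-!
Surface area is monotone under inclusion of convex bodies: the metric projection onto a closed
convex set `A ⊆ B` is 1-Lipschitz and maps `∂B` onto `∂A` (follow the outer normal at a point of
`∂A` until the ray leaves `B`). Hence `H^{n-1}(∂K)` lies between `((1 ∓ ε) r)^{n-1} |S^{n-1}|`.
Central sections are monotone too, so `vol_{n-1}(K ∩ θ⊥)` lies between `((1 ∓ ε) r)^{n-1} κ`,
where `κ` is the volume of the unit `(n-1)`-ball, and the normalisation gives `c = κ^{-(n+1)}`.
Feeding both bounds into the identity gives `((1-ε)r)^{n-1} ≤ ((1+ε)r)^{(n-1)(n+1)}` and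
`((1-ε)r)^{(n-1)(n+1)} ≤ ((1+ε)r)^{n-1}`; taking `(n-1)`-th roots gives the bounds on `rⁿ`.
-/

open MeasureTheory Metric Set Real
open scoped ENNReal RealInnerProductSpace Pointwise

noncomputable section

abbrev Eucl (n : ℕ) := EuclideanSpace ℝ (Fin n)

/-- The support function of a set `K`. -/
def suppFn {n : ℕ} (K : Set (Eucl n)) (θ : Eucl n) : ℝ :=
  sSup ((fun x => ⟪x, θ⟫) '' K)

/-- The radial function of a set `K`. -/
def radFn {n : ℕ} (K : Set (Eucl n)) (θ : Eucl n) : ℝ :=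
  sSup {t : ℝ | 0 < t ∧ t • θ ∈ K}

/-- An origin-symmetric convex body. -/
def IsSymmConvexBody {n : ℕ} (K : Set (Eucl n)) : Prop :=
  Convex ℝ K ∧ IsCompact K ∧ (interior K).Nonempty ∧ K = -K

/-- `vol_{n-1}(K ∩ θ^⊥)`, the `(n-1)`-dimensional Hausdorff measure of the
central hyperplane section of `K` orthogonal to `θ`. -/
def secVol (n : ℕ) (K : Set (Eucl n)) (θ : Eucl n) : ℝ :=
  (μH[(n : ℝ) - 1] (K ∩ {x : Eucl n | ⟪x, θ⟫ = 0})).toReal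

lemma Bornology.IsBounded.exists_add_smul_notMem {F : Type*} [NormedAddCommGroup F]
    [NormedSpace ℝ F] {B : Set F} (hB : Bornology.IsBounded B) (x : F) {u : F} (hu : u ≠ 0) :
    ∃ t : ℝ, 0 ≤ t ∧ x + t • u ∉ B := by
  obtain ⟨R, hR⟩ := hB.subset_closedBall 0
  set t := (|R| + ‖x‖ + 1) / ‖u‖
  have ht : 0 ≤ t := by positivity
  refine ⟨t, ht, fun htB => ?_⟩
  have h₁ : ‖x + t • u‖ ≤ R := by simpa using hR htB
  have h₂ : ‖t • u‖ = |R| + ‖x‖ + 1 := by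
    rw [norm_smul, Real.norm_of_nonneg ht, div_mul_cancel₀ _ (norm_ne_zero_iff.2 hu)]
  have h₃ := norm_sub_le (x + t • u) x
  rw [add_sub_cancel_left] at h₃
  linarith [le_abs_self R]

section ConvexProjection

variable {E : Type*} [NormedAddCommGroup E] [InnerProductSpace ℝ E]

lemma norm_sub_le_of_inner_nonpos {x y p q : E} (hp : ⟪x - p, q - p⟫ ≤ 0)
    (hq : ⟪y - q, p - q⟫ ≤ 0) : ‖p - q‖ ≤ ‖x - y‖ := by
  have key : ⟪p - q, p - q⟫ ≤ ⟪x - y, p - q⟫ := by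
    have e : ⟪x - y, p - q⟫ - ⟪p - q, p - q⟫ = -(⟪x - p, q - p⟫ + ⟪y - q, p - q⟫) := by
      simp only [inner_sub_left, inner_sub_right, real_inner_comm]; ring
    linarith
  rw [real_inner_self_eq_norm_sq] at key
  nlinarith [real_inner_le_norm (x - y) (p - q), norm_nonneg (p - q), norm_nonneg (x - y)]

open Classical in
/-- The metric projection onto `A`, characterised by the variational inequality; junk value `z`
when no point of `A` satisfies it. -/
def convexProj (A : Set E) (z : E) : E :=
  if h : ∃ v ∈ A, ∀ w ∈ A, ⟪z - v, w - v⟫ ≤ 0 then h.choose else z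

lemma convexProj_eq_of_inner_nonpos {A : Set E} {z v : E} (hv : v ∈ A)
    (h : ∀ w ∈ A, ⟪z - v, w - v⟫ ≤ 0) : convexProj A z = v := by
  have hex : ∃ v ∈ A, ∀ w ∈ A, ⟪z - v, w - v⟫ ≤ 0 := ⟨v, hv, h⟩
  rw [convexProj, dif_pos hex]
  obtain ⟨hp, hpz⟩ := hex.choose_spec
  have := norm_sub_le_of_inner_nonpos (hpz v hv) (h _ hp)
  rwa [sub_self, norm_zero, norm_le_zero_iff, sub_eq_zero] at this

variable [CompleteSpace E] {A : Set E}

lemma exists_mem_forall_inner_sub_nonpos (hA : Convex ℝ A) (hAc : IsClosed A) (hne : A.Nonempty)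
    (z : E) : ∃ v ∈ A, ∀ w ∈ A, ⟪z - v, w - v⟫ ≤ 0 := by
  obtain ⟨v, hv, hmin⟩ := exists_norm_eq_iInf_of_complete_convex hne hAc.isComplete hA z
  exact ⟨v, hv, (norm_eq_iInf_iff_real_inner_le_zero hA hv).1 hmin⟩

lemma lipschitzWith_one_convexProj (hA : Convex ℝ A) (hAc : IsClosed A) (hne : A.Nonempty) :
    LipschitzWith 1 (convexProj A) := by
  refine LipschitzWith.of_dist_le_mul fun x y => ?_
  obtain ⟨p, hp, hpx⟩ := exists_mem_forall_inner_sub_nonpos hA hAc hne x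
  obtain ⟨q, hq, hqy⟩ := exists_mem_forall_inner_sub_nonpos hA hAc hne y
  rw [convexProj_eq_of_inner_nonpos hp hpx, convexProj_eq_of_inner_nonpos hq hqy,
    NNReal.coe_one, one_mul, dist_eq_norm, dist_eq_norm]
  exact norm_sub_le_of_inner_nonpos (hpx q hq) (hqy p hp)

lemma Convex.exists_inner_sub_nonpos_of_notMem_interior (hA : Convex ℝ A)
    (hAi : (interior A).Nonempty) {x : E} (hx : x ∉ interior A) :
    ∃ u : E, u ≠ 0 ∧ ∀ y ∈ A, ⟪u, y - x⟫ ≤ 0 := by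
  obtain ⟨f, hf⟩ := geometric_hahn_banach_open_point hA.interior isOpen_interior hx
  obtain ⟨y₀, hy₀⟩ := hAi
  set u := (InnerProductSpace.toDual ℝ E).symm f
  have hu : ∀ y, ⟪u, y⟫ = f y := fun y => InnerProductSpace.toDual_symm_apply
  refine ⟨u, fun h0 => ?_, fun y hy => ?_⟩
  · have := hf y₀ hy₀
    rw [← hu, ← hu, h0, inner_zero_left, inner_zero_left] at this
    exact lt_irrefl 0 this
  · have hcl : closure (interior A) ⊆ {y | f y ≤ f x} :=
      closure_minimal (fun a ha => (hf a ha).le) (isClosed_le f.continuous continuous_const)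
    have hy' : f y ≤ f x := hcl <| by
      rw [hA.closure_interior_eq_closure_of_nonempty_interior ⟨y₀, hy₀⟩]
      exact subset_closure hy
    rw [inner_sub_right, hu, hu]
    linarith

-- Follow the outer normal `u` at `x ∈ ∂A`: the ray leaves `B`, so it crosses `∂B` at a point
-- that projects back to `x`.
lemma frontier_subset_image_convexProj (hA : Convex ℝ A) (hAc : IsClosed A)
    (hAi : (interior A).Nonempty) {B : Set E} (hB : Bornology.IsBounded B) (hAB : A ⊆ B) :
    frontier A ⊆ convexProj A '' frontier B := by
  intro x hx
  have hxA : x ∈ A := hAc.frontier_subset hx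
  obtain ⟨u, hu0, hu⟩ := hA.exists_inner_sub_nonpos_of_notMem_interior hAi hx.2
  obtain ⟨t₀, ht₀, hout⟩ := hB.exists_add_smul_notMem x hu0
  have : PreconnectedSpace (Ici (0 : ℝ)) := Subtype.preconnectedSpace isPreconnected_Ici
  set g : Ici (0 : ℝ) → E := fun t => x + (t : ℝ) • u
  obtain ⟨⟨t, ht⟩, htB⟩ := (nonempty_frontier_iff (s := g ⁻¹' B)).2
    ⟨⟨⟨0, self_mem_Ici⟩, by simpa [g] using hAB hxA⟩,
      (ne_univ_iff_exists_notMem _).2 ⟨⟨t₀, ht₀⟩, hout⟩⟩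
  refine ⟨g ⟨t, ht⟩, (by fun_prop : Continuous g).frontier_preimage_subset B htB, ?_⟩
  refine convexProj_eq_of_inner_nonpos hxA fun w hw => ?_
  rw [show g ⟨t, ht⟩ - x = t • u by simp [g], real_inner_smul_left]
  exact mul_nonpos_of_nonneg_of_nonpos ht (hu w hw)

variable [MeasurableSpace E] [BorelSpace E]

lemma hausdorffMeasure_frontier_mono (hA : Convex ℝ A) (hAc : IsClosed A)
    (hAi : (interior A).Nonempty) {B : Set E} (hB : Bornology.IsBounded B) (hAB : A ⊆ B)
    {d : ℝ} (hd : 0 ≤ d) : μH[d] (frontier A) ≤ μH[d] (frontier B) :=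
  calc μH[d] (frontier A) ≤ μH[d] (convexProj A '' frontier B) :=
        measure_mono (frontier_subset_image_convexProj hA hAc hAi hB hAB)
    _ ≤ μH[d] (frontier B) := by
        simpa using (lipschitzWith_one_convexProj hA hAc
          (hAi.mono interior_subset)).hausdorffMeasure_image_le hd (frontier B)

end ConvexProjection

section FiniteDimensional

open Module

variable {V : Type*} [NormedAddCommGroup V] [InnerProductSpace ℝ V]

lemma finrank_orthogonal_span_singleton_of_ne_zero [FiniteDimensional ℝ V] {θ : V}
    (hθ : θ ≠ 0) : finrank ℝ (ℝ ∙ θ)ᗮ = finrank ℝ V - 1 := by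
  have := (ℝ ∙ θ).finrank_add_finrank_orthogonal
  rw [finrank_span_singleton hθ] at this
  omega

lemma setOf_inner_eq_zero_eq_orthogonal (θ : V) : {x : V | ⟪x, θ⟫ = 0} = ((ℝ ∙ θ)ᗮ : Set V) := by
  ext x
  exact Submodule.mem_orthogonal_singleton_iff_inner_left.symm

variable [MeasurableSpace V] [BorelSpace V]

lemma hausdorffMeasure_lt_top_of_subset_submodule (W : Submodule ℝ V) [FiniteDimensional ℝ W]
    {s : Set V} (hs : IsCompact s) (hsW : s ⊆ W) : μH[(finrank ℝ W : ℝ)] s < ⊤ := by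
  have hiso : Isometry ((↑) : W → V) := W.subtypeₗᵢ.isometry
  have himg : ((↑) : W → V) '' ((↑) ⁻¹' s) = s :=
    image_preimage_eq_of_subset (by rwa [Subtype.range_coe])
  rw [← himg, hiso.hausdorffMeasure_image (Or.inl (Nat.cast_nonneg _))]
  exact (hiso.isClosedEmbedding.isCompact_preimage hs).measure_lt_top

lemma hausdorffMeasure_lt_top_of_subset_hyperplane [FiniteDimensional ℝ V] {θ : V}
    (hθ : ‖θ‖ = 1) (c : ℝ) {s : Set V} (hs : IsCompact s) (hsθ : s ⊆ {x | ⟪x, θ⟫ = c}) :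
    μH[((finrank ℝ V - 1 : ℕ) : ℝ)] s < ⊤ := by
  have hθ0 : θ ≠ 0 := norm_ne_zero_iff.1 (by rw [hθ]; exact one_ne_zero)
  set τ : V ≃ᵢ V := IsometryEquiv.subRight (c • θ)
  have hsub : τ '' s ⊆ (ℝ ∙ θ)ᗮ := by
    rintro _ ⟨x, hx, rfl⟩
    rw [SetLike.mem_coe, Submodule.mem_orthogonal_singleton_iff_inner_left]
    simpa [τ, inner_sub_left, real_inner_smul_left, hθ, sub_eq_zero] using hsθ hx
  rw [← τ.hausdorffMeasure_image, ← finrank_orthogonal_span_singleton_of_ne_zero hθ0]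
  exact hausdorffMeasure_lt_top_of_subset_submodule _ (hs.image τ.continuous) hsub

lemma hausdorffMeasure_sphere_pos [FiniteDimensional ℝ V] [Nontrivial V] :
    0 < μH[((finrank ℝ V - 1 : ℕ) : ℝ)] (sphere (0 : V) 1) := by
  obtain ⟨θ, hθ⟩ := exists_norm_eq V zero_le_one
  have hθ0 : θ ≠ 0 := norm_ne_zero_iff.1 (by rw [hθ]; exact one_ne_zero)
  set W := (ℝ ∙ θ)ᗮ
  have hθW : θ ∈ Wᗮ := by
    rw [Submodule.orthogonal_orthogonal]; exact Submodule.mem_span_singleton_self θ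
  have hball : closedBall (0 : W) 1 ⊆ W.orthogonalProjectionOnto '' sphere 0 1 := by
    intro y hy
    have hy1 : ‖(y : V)‖ ^ 2 ≤ 1 := by
      rw [mem_closedBall_zero_iff] at hy
      exact pow_le_one₀ (norm_nonneg _) hy
    have hyθ : ⟪(y : V), θ⟫ = 0 := Submodule.mem_orthogonal_singleton_iff_inner_left.1 y.2
    refine ⟨y + √(1 - ‖(y : V)‖ ^ 2) • θ, ?_, ?_⟩
    · rw [mem_sphere_zero_iff_norm, ← sq_eq_sq₀ (norm_nonneg _) zero_le_one, norm_add_sq_real,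
        real_inner_smul_right, hyθ, norm_smul, hθ, mul_one, Real.norm_eq_abs, sq_abs,
        Real.sq_sqrt (by linarith)]
      ring
    · rw [map_add, map_smul, Submodule.orthogonalProjectionOnto_mem_subspace_eq_self,
        Submodule.orthogonalProjectionOnto_apply_of_mem_orthogonal hθW, smul_zero, add_zero]
  rw [← finrank_orthogonal_span_singleton_of_ne_zero hθ0]
  calc 0 < μH[(finrank ℝ W : ℝ)] (closedBall (0 : W) 1) := measure_closedBall_pos _ _ one_pos
    _ ≤ μH[(finrank ℝ W : ℝ)] (W.orthogonalProjectionOnto '' sphere 0 1) := measure_mono hball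
    _ ≤ μH[(finrank ℝ W : ℝ)] (sphere (0 : V) 1) :=
      hausdorffMeasure_orthogonalProjectionOnto_le W _ _ (Nat.cast_nonneg _)

lemma hausdorffMeasure_closedBall_inter_submodule (W : Submodule ℝ V) [FiniteDimensional ℝ W]
    {d : ℕ} (hd : finrank ℝ W = d) (R : ℝ) :
    μH[(d : ℝ)] (closedBall (0 : V) R ∩ W) = μH[(d : ℝ)] (closedBall (0 : Eucl d) R) := by
  subst hd
  set L := (stdOrthonormalBasis ℝ W).repr
  have hW : closedBall (0 : V) R ∩ W = ((↑) : W → V) '' (L.symm '' closedBall 0 R) := by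
    rw [L.symm.image_closedBall, map_zero]
    ext x
    simp [and_comm]
  rw [hW, isometry_subtype_coe.hausdorffMeasure_image (Or.inl (Nat.cast_nonneg _)),
    L.symm.isometry.hausdorffMeasure_image (Or.inl (Nat.cast_nonneg _))]

lemma hausdorffMeasure_sphere {d : ℕ} {R : ℝ} (hR : 0 < R) :
    μH[(d : ℝ)] (sphere (0 : V) R) = ENNReal.ofReal (R ^ d) * μH[(d : ℝ)] (sphere (0 : V) 1) := by
  have hsph : sphere (0 : V) R = R • sphere 0 1 := by
    rw [smul_sphere' hR.ne', smul_zero, Real.norm_of_nonneg hR.le, mul_one]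
  rw [hsph, Measure.hausdorffMeasure_smul₀ (Nat.cast_nonneg _) hR.ne', ENNReal.smul_def,
    smul_eq_mul, NNReal.rpow_natCast, ENNReal.coe_pow, ENNReal.ofReal_pow hR.le,
    Real.nnnorm_of_nonneg hR.le, ENNReal.ofReal_eq_coe_nnreal]

end FiniteDimensional

lemma toReal_hausdorffMeasure_frontier_mem_Icc {V : Type*} [NormedAddCommGroup V]
    [InnerProductSpace ℝ V] [CompleteSpace V] [Nontrivial V] [MeasurableSpace V] [BorelSpace V]
    {K : Set V} (hK : Convex ℝ K) (hKc : IsClosed K) {R₁ R₂ : ℝ} (hR₁ : 0 < R₁)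
    (h₁ : closedBall 0 R₁ ⊆ K) (h₂ : K ⊆ closedBall 0 R₂) {d : ℕ}
    (hS : μH[(d : ℝ)] (sphere (0 : V) 1) ≠ ⊤) :
    (μH[(d : ℝ)] (frontier K)).toReal ∈
      Icc (R₁ ^ d * (μH[(d : ℝ)] (sphere (0 : V) 1)).toReal)
        (R₂ ^ d * (μH[(d : ℝ)] (sphere (0 : V) 1)).toReal) := by
  obtain ⟨v, hv⟩ := exists_norm_eq V hR₁.le
  have hR₂ : 0 < R₂ := hR₁.trans_le <| by
    simpa [hv] using h₂ (h₁ (mem_closedBall_zero_iff.2 hv.le))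
  have hint : (interior (closedBall (0 : V) R₁)).Nonempty :=
    ⟨0, by rw [interior_closedBall _ hR₁.ne']; exact mem_ball_self hR₁⟩
  have hle₂ : μH[(d : ℝ)] (frontier K) ≤ μH[(d : ℝ)] (sphere (0 : V) R₂) := by
    rw [← frontier_closedBall _ hR₂.ne']
    exact hausdorffMeasure_frontier_mono hK hKc (hint.mono (interior_mono h₁))
      isBounded_closedBall h₂ (Nat.cast_nonneg _)
  have hle₁ : μH[(d : ℝ)] (sphere (0 : V) R₁) ≤ μH[(d : ℝ)] (frontier K) := by
    rw [← frontier_closedBall _ hR₁.ne']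
    exact hausdorffMeasure_frontier_mono (convex_closedBall _ _) isClosed_closedBall hint
      (isBounded_closedBall.subset h₂) h₁ (Nat.cast_nonneg _)
  have hfin : μH[(d : ℝ)] (sphere (0 : V) R₂) ≠ ⊤ := by
    rw [hausdorffMeasure_sphere hR₂]
    exact ENNReal.mul_ne_top ENNReal.ofReal_ne_top hS
  rw [hausdorffMeasure_sphere hR₁] at hle₁
  rw [hausdorffMeasure_sphere hR₂] at hle₂ hfin
  constructor
  · simpa [ENNReal.toReal_mul, ENNReal.toReal_ofReal (pow_nonneg hR₁.le d)] using
      ENNReal.toReal_mono (ne_top_of_le_ne_top hfin hle₂) hle₁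
  · simpa [ENNReal.toReal_mul, ENNReal.toReal_ofReal (pow_nonneg hR₂.le d)] using
      ENNReal.toReal_mono hfin hle₂

section Euclidean

instance {N : ℕ} : (μH[(N : ℝ)] : Measure (Eucl N)).IsAddHaarMeasure := by
  simpa using isAddHaarMeasure_hausdorffMeasure (E := Eucl N)

/-- The cube `[-1, 1]ᴺ`, i.e. the unit ball of the sup norm. -/
def unitCube (N : ℕ) : Set (Eucl N) := EuclideanSpace.equiv (Fin N) ℝ ⁻¹' closedBall 0 1

lemma isCompact_unitCube (N : ℕ) : IsCompact (unitCube N) :=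
  (EuclideanSpace.equiv (Fin N) ℝ).toHomeomorph.isCompact_preimage.2 (isCompact_closedBall _ _)

lemma closedBall_subset_unitCube (N : ℕ) : closedBall (0 : Eucl N) 1 ⊆ unitCube N := by
  intro x hx
  rw [mem_closedBall_zero_iff] at hx
  exact mem_closedBall_zero_iff.2 <|
    (pi_norm_le_iff_of_nonneg zero_le_one).2 fun i => (PiLp.norm_apply_le x i).trans hx

lemma frontier_unitCube_subset (N : ℕ) :
    frontier (unitCube N) ⊆ ⋃ i, (unitCube N ∩ {x | x i = 1} ∪ unitCube N ∩ {x | x i = -1}) := by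
  intro x hx
  rw [unitCube, ← ContinuousLinearEquiv.coe_toHomeomorph, ← Homeomorph.preimage_frontier,
    frontier_closedBall _ one_ne_zero, mem_preimage, mem_sphere_zero_iff_norm] at hx
  obtain ⟨i, hi⟩ : ∃ i, ¬ ‖x i‖ < 1 := by
    by_contra! h
    exact (((pi_norm_lt_iff one_pos).2 h).trans_eq hx.symm).false
  have hxQ : x ∈ unitCube N := mem_closedBall_zero_iff.2 hx.le
  have hxi : |x i| = 1 :=
    le_antisymm (hx ▸ norm_le_pi_norm (EuclideanSpace.equiv (Fin N) ℝ x) i) (not_lt.1 hi)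
  exact mem_iUnion.2 ⟨i, ((abs_eq zero_le_one).1 hxi).imp (⟨hxQ, ·⟩) (⟨hxQ, ·⟩)⟩

-- Compare with the cube, whose boundary lies in `2N` compact pieces of hyperplanes.
lemma hausdorffMeasure_sphere_lt_top (N : ℕ) :
    μH[((N - 1 : ℕ) : ℝ)] (sphere (0 : Eucl N) 1) < ⊤ := by
  have hface : ∀ i c, μH[((N - 1 : ℕ) : ℝ)] (unitCube N ∩ {x | x i = c}) < ⊤ := fun i c => by
    simpa using hausdorffMeasure_lt_top_of_subset_hyperplane
      (by simp : ‖EuclideanSpace.single i (1 : ℝ)‖ = 1) c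
      ((isCompact_unitCube N).inter_right (isClosed_eq (by fun_prop) continuous_const))
      (fun x hx => by simpa [EuclideanSpace.inner_single_right] using hx.2)
  rw [← frontier_closedBall (0 : Eucl N) one_ne_zero]
  calc μH[((N - 1 : ℕ) : ℝ)] (frontier (closedBall (0 : Eucl N) 1))
      ≤ μH[((N - 1 : ℕ) : ℝ)] (frontier (unitCube N)) :=
        hausdorffMeasure_frontier_mono (convex_closedBall _ _) isClosed_closedBall
          ⟨0, by rw [interior_closedBall _ one_ne_zero]; exact mem_ball_self one_pos⟩
          (isCompact_unitCube N).isBounded (closedBall_subset_unitCube N) (Nat.cast_nonneg _)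
    _ ≤ ∑ i, μH[((N - 1 : ℕ) : ℝ)] (unitCube N ∩ {x | x i = 1} ∪ unitCube N ∩ {x | x i = -1}) :=
        (measure_mono (frontier_unitCube_subset N)).trans (measure_iUnion_fintype_le _ _)
    _ < ⊤ := ENNReal.sum_lt_top.2 fun i _ =>
        (measure_union_le _ _).trans_lt (ENNReal.add_lt_top.2 ⟨hface i 1, hface i (-1)⟩)

lemma toReal_hausdorffMeasure_sphere_pos (N : ℕ) [NeZero N] :
    0 < (μH[((N - 1 : ℕ) : ℝ)] (sphere (0 : Eucl N) 1)).toReal :=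
  ENNReal.toReal_pos (by simpa using (hausdorffMeasure_sphere_pos (V := Eucl N)).ne')
    (hausdorffMeasure_sphere_lt_top N).ne

end Euclidean

section SectionVolume

variable {n : ℕ} {θ : Eucl n}

lemma hausdorffMeasure_hyperplane_section_lt_top (hθ : θ ≠ 0) {L : Set (Eucl n)}
    (hL : Bornology.IsBounded L) :
    μH[((n - 1 : ℕ) : ℝ)] (L ∩ {x | ⟪x, θ⟫ = 0}) < ⊤ := by
  have hW := finrank_orthogonal_span_singleton_of_ne_zero hθ
  rw [finrank_euclideanSpace_fin] at hW
  rw [setOf_inner_eq_zero_eq_orthogonal, ← hW]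
  exact (measure_mono (inter_subset_inter_left _ subset_closure)).trans_lt
    (hausdorffMeasure_lt_top_of_subset_submodule _
      (hL.isCompact_closure.inter_right (Submodule.closed_of_finiteDimensional _))
      inter_subset_right)

lemma secVol_mono (hn : 0 < n) (hθ : θ ≠ 0) {K L : Set (Eucl n)} (hKL : K ⊆ L)
    (hL : Bornology.IsBounded L) : secVol n K θ ≤ secVol n L θ := by
  rw [secVol, secVol, ← Nat.cast_pred hn]
  exact ENNReal.toReal_mono (hausdorffMeasure_hyperplane_section_lt_top hθ hL).ne
    (measure_mono (inter_subset_inter_left _ hKL))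

lemma secVol_closedBall (hn : 0 < n) (hθ : θ ≠ 0) {R : ℝ} (hR : 0 ≤ R) :
    secVol n (closedBall 0 R) θ =
      R ^ (n - 1) * (μH[((n - 1 : ℕ) : ℝ)] (closedBall (0 : Eucl (n - 1)) 1)).toReal := by
  have hW := finrank_orthogonal_span_singleton_of_ne_zero hθ
  rw [finrank_euclideanSpace_fin] at hW
  rw [secVol, ← Nat.cast_pred hn, setOf_inner_eq_zero_eq_orthogonal,
    hausdorffMeasure_closedBall_inter_submodule _ hW]
  simpa [measureReal_def] using
    Measure.addHaar_real_closedBall' (μH[((n - 1 : ℕ) : ℝ)] : Measure (Eucl (n - 1))) 0 hR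

lemma secVol_mem_Icc (hn : 0 < n) (hθ : θ ≠ 0) {K : Set (Eucl n)} {R₁ R₂ : ℝ} (hR₁ : 0 ≤ R₁)
    (h₁ : closedBall 0 R₁ ⊆ K) (h₂ : K ⊆ closedBall 0 R₂) :
    secVol n K θ ∈ Icc
      (R₁ ^ (n - 1) * (μH[((n - 1 : ℕ) : ℝ)] (closedBall (0 : Eucl (n - 1)) 1)).toReal)
      (R₂ ^ (n - 1) * (μH[((n - 1 : ℕ) : ℝ)] (closedBall (0 : Eucl (n - 1)) 1)).toReal) := by
  have hR₂ : 0 ≤ R₂ := by simpa using h₂ (h₁ (mem_closedBall_self hR₁))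
  rw [← secVol_closedBall hn hθ hR₁, ← secVol_closedBall hn hθ hR₂]
  exact ⟨secVol_mono hn hθ h₁ (isBounded_closedBall.subset h₂),
    secVol_mono hn hθ h₂ isBounded_closedBall⟩

lemma setIntegral_secVol_closedBall_pow (hn : 0 < n) (m : ℕ) :
    ∫ θ in sphere (0 : Eucl n) 1, secVol n (closedBall 0 1) θ ^ m ∂μH[(n : ℝ) - 1] =
      (μH[(n : ℝ) - 1] (sphere (0 : Eucl n) 1)).toReal *
        (μH[((n - 1 : ℕ) : ℝ)] (closedBall (0 : Eucl (n - 1)) 1)).toReal ^ m := by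
  rw [setIntegral_congr_fun isClosed_sphere.measurableSet fun θ hθ => by
      rw [secVol_closedBall hn (ne_of_mem_sphere hθ one_ne_zero) zero_le_one, one_pow, one_mul],
    setIntegral_const, smul_eq_mul, measureReal_def]

end SectionVolume

lemma setIntegral_mem_Icc_of_ne_zero {α : Type*} [MeasurableSpace α] {μ : Measure α} {S : Set α}
    (hS : MeasurableSet S) (hμS : μ S ≠ ⊤) {f : α → ℝ} {a b : ℝ} (hf : ∀ x ∈ S, f x ∈ Icc a b)
    (hI : ∫ x in S, f x ∂μ ≠ 0) :
    ∫ x in S, f x ∂μ ∈ Icc (a * μ.real S) (b * μ.real S) := by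
  have hfi : IntegrableOn f S μ := Integrable.of_integral_ne_zero hI
  refine ⟨setIntegral_ge_of_const_le_real hS hμS (fun x hx => (hf x hx).1) hfi, ?_⟩
  rw [mul_comm, ← smul_eq_mul, ← setIntegral_const]
  exact setIntegral_mono_on hfi (integrableOn_const hμS) hS fun x hx => (hf x hx).2

lemma le_pow_and_pow_le_of_squeeze {s b A I x y : ℝ} {m : ℕ} (hs : 0 < s) (hb : 0 < b)
    (hA : A = (b ^ m)⁻¹ * I) (hA' : A ∈ Icc (x * s) (y * s))
    (hI : I ∈ Icc ((x * b) ^ m * s) ((y * b) ^ m * s)) : x ≤ y ^ m ∧ x ^ m ≤ y := by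
  subst hA
  obtain ⟨h₁, h₂⟩ := hA'
  obtain ⟨h₃, h₄⟩ := hI
  rw [mul_pow] at h₃ h₄
  constructor <;> refine le_of_mul_le_mul_right ?_ hs
  · calc x * s ≤ (b ^ m)⁻¹ * I := h₁
      _ ≤ (b ^ m)⁻¹ * (y ^ m * b ^ m * s) := by gcongr
      _ = y ^ m * s := by field_simp
  · calc x ^ m * s = (b ^ m)⁻¹ * (x ^ m * b ^ m * s) := by field_simp
      _ ≤ (b ^ m)⁻¹ * I := by gcongr
      _ ≤ y * s := h₂

lemma div_le_pow_and_pow_le_div {ε r : ℝ} (hε : ε ∈ Ioo (0 : ℝ) 1) (hr : 0 < r) {n : ℕ}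
    (hn : 2 ≤ n) (h : ((1 - ε) * r) ^ (n - 1) ≤ (((1 + ε) * r) ^ (n - 1)) ^ (n + 1) ∧
      (((1 - ε) * r) ^ (n - 1)) ^ (n + 1) ≤ ((1 + ε) * r) ^ (n - 1)) :
    (1 - ε) / (1 + ε) ^ (n + 1) ≤ r ^ n ∧ r ^ n ≤ (1 + ε) / (1 - ε) ^ (n + 1) := by
  obtain ⟨hε0, hε1⟩ := hε
  obtain ⟨hlow, hup⟩ := h
  have hd : n - 1 ≠ 0 := by omega
  have hR₁ : 0 ≤ (1 - ε) * r := (mul_pos (sub_pos.2 hε1) hr).le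
  rw [← pow_mul, Nat.mul_comm, pow_mul] at hlow hup
  replace hlow := (pow_le_pow_iff_left₀ hR₁ (by positivity) hd).1 hlow
  replace hup := (pow_le_pow_iff_left₀ (by positivity) (by positivity) hd).1 hup
  rw [mul_pow, pow_succ r n, ← mul_assoc] at hlow hup
  constructor
  · rw [div_le_iff₀ (by positivity), mul_comm]
    exact le_of_mul_le_mul_right hlow hr
  · rw [le_div_iff₀ (by nlinarith [pow_pos (sub_pos.2 hε1) (n + 1)]), mul_comm]
    exact le_of_mul_le_mul_right hup hr

/-- a body satisfying the integrated eighth Busemann–Petty condition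
(with the constant normalized by the unit ball), squeezed between `(1-ε)r B` and
`(1+ε)r B`, has `(1-ε)/(1+ε)^{n+1} ≤ rⁿ ≤ (1+ε)/(1-ε)^{n+1}`. -/
theorem stmt_4 (n : ℕ) (hn : 3 ≤ n) (ε r c : ℝ) (hε : ε ∈ Ioo (0 : ℝ) 1) (hr : 0 < r)
    (K : Set (Eucl n)) (hK : IsSymmConvexBody K)
    (h1 : closedBall (0 : Eucl n) ((1 - ε) * r) ⊆ K)
    (h2 : K ⊆ closedBall (0 : Eucl n) ((1 + ε) * r))
    (hc : c = (μH[(n : ℝ) - 1] (sphere (0 : Eucl n) 1)).toReal /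
      ∫ θ in sphere (0 : Eucl n) 1,
        (secVol n (closedBall (0 : Eucl n) 1) θ) ^ (n + 1) ∂μH[(n : ℝ) - 1])
    (hBP : (μH[(n : ℝ) - 1] (frontier K)).toReal =
      c * ∫ θ in sphere (0 : Eucl n) 1, (secVol n K θ) ^ (n + 1) ∂μH[(n : ℝ) - 1]) :
    (1 - ε) / (1 + ε) ^ (n + 1) ≤ r ^ n ∧ r ^ n ≤ (1 + ε) / (1 - ε) ^ (n + 1) := by
  obtain ⟨hKconv, hKcomp, -, -⟩ := hK
  have hn0 : 0 < n := by omega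
  have : NeZero n := ⟨hn0.ne'⟩
  have hR₁ : 0 < (1 - ε) * r := mul_pos (sub_pos.2 hε.2) hr
  rw [setIntegral_secVol_closedBall_pow hn0] at hc
  rw [← Nat.cast_pred hn0] at hc hBP
  set b := (μH[((n - 1 : ℕ) : ℝ)] (closedBall (0 : Eucl (n - 1)) 1)).toReal
  have hb : 0 < b := ENNReal.toReal_pos (measure_closedBall_pos _ _ one_pos).ne'
    measure_closedBall_lt_top.ne
  have hSfin := hausdorffMeasure_sphere_lt_top n
  have hs := toReal_hausdorffMeasure_sphere_pos n
  rw [div_mul_cancel_left₀ hs.ne'] at hc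
  have hS := toReal_hausdorffMeasure_frontier_mem_Icc hKconv hKcomp.isClosed hR₁ h1 h2 hSfin.ne
  -- The integrand is not known to be measurable; it is integrable because, by `hBP`, its
  -- integral is not the junk value `0`.
  have hI0 : ∫ θ in sphere (0 : Eucl n) 1, secVol n K θ ^ (n + 1) ∂μH[((n - 1 : ℕ) : ℝ)] ≠ 0 :=
    fun h => by
      rw [h, mul_zero] at hBP
      exact (mul_pos (pow_pos hR₁ _) hs).not_ge (hS.1.trans_eq hBP)
  have hsec : ∀ θ ∈ sphere (0 : Eucl n) 1, secVol n K θ ^ (n + 1) ∈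
      Icc ((((1 - ε) * r) ^ (n - 1) * b) ^ (n + 1)) ((((1 + ε) * r) ^ (n - 1) * b) ^ (n + 1)) :=
    fun θ hθ => by
      obtain ⟨h₁, h₂⟩ := secVol_mem_Icc hn0 (ne_of_mem_sphere hθ one_ne_zero) hR₁.le h1 h2
      exact ⟨pow_le_pow_left₀ (by positivity) h₁ _, pow_le_pow_left₀ ENNReal.toReal_nonneg h₂ _⟩
  exact div_le_pow_and_pow_le_div hε hr (by omega : 2 ≤ n) <| le_pow_and_pow_le_of_squeeze hs hb
    (hBP.trans (by rw [hc])) hS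
    (setIntegral_mem_Icc_of_ne_zero isClosed_sphere.measurableSet hSfin.ne hsec hI0)
end
end

section
/- Let n ≥ 2, ε ∈ (0,1), and let K ⊂ ℝⁿ be an origin-symmetric convex body with (1−ε) B₂ⁿ ⊆ K ⊆ (1+ε) B₂ⁿ. Then there exists a symmetric positive-definite linear map T : ℝⁿ → ℝⁿ with det T = 1 and ‖T‖, ‖T⁻¹‖ ≤ ((1+ε)/(1−ε))^{(n+2)/2} such that the body K̃ = T⁻¹K is in isotropic position, i.e., there is a constant c > 0 with ∫_{K̃} ⟨x,y⟩² dy = c |x|² for all x ∈ ℝⁿ; moreover (1−ε)((1−ε)/(1+ε))^{(n+2)/2} B₂ⁿ ⊆ K̃ ⊆ (1+ε)((1+ε)/(1−ε))^{(n+2)/2} B₂ⁿ. -/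
open MeasureTheory Metric Set Real
open scoped ENNReal RealInnerProductSpace Pointwise

noncomputable section

/-!
Let `M` be the second-moment operator of `K`, `⟪M x, z⟫ = ∫_K ⟪x, y⟫ ⟪z, y⟫ dy`, with eigenvalues
`a i` in an orthonormal eigenbasis `b`. Take `T` diagonal in `b` with eigenvalues `√(a i / G)`,
where `G` is the geometric mean of the `a i`. Then `det T = 1`, and the change of variables
`y = T⁻¹ z` shows that the quadratic form of `T⁻¹ K` is `⟪M T⁻¹ x, T⁻¹ x⟫ = G ‖x‖²`.

Each `a i = ∫_K ⟪b i, y⟫²` lies between the same integrals over the balls of radii `1 ∓ ε`. By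
rotation invariance and homogeneity of degree `n + 2` these equal `(1 ∓ ε) ^ (n + 2) κ`, with `κ`
independent of the direction. Hence `a i ≤ ((1 + ε) / (1 - ε)) ^ (n + 2) a j` for all `i, j`, so
both `a i / G` and `G / a i` obey the same bound. Taking square roots bounds `‖T‖` and `‖T⁻¹‖`,
and the ball inclusions for `T⁻¹ K` follow.
-/

open InnerProductSpace Module

section GeomMean

variable {ι : Type*} [Fintype ι]

def geomMean (a : ι → ℝ) : ℝ := (∏ i, a i) ^ (Fintype.card ι : ℝ)⁻¹

variable {a : ι → ℝ} {Q : ℝ}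

theorem geomMean_nonneg (ha : ∀ i, 0 ≤ a i) : 0 ≤ geomMean a :=
  rpow_nonneg (Finset.prod_nonneg fun i _ => ha i) _

theorem geomMean_pos (ha : ∀ i, 0 < a i) : 0 < geomMean a :=
  rpow_pos_of_pos (Finset.prod_pos fun i _ => ha i) _

theorem geomMean_pow_card [Nonempty ι] (ha : ∀ i, 0 ≤ a i) :
    geomMean a ^ Fintype.card ι = ∏ i, a i :=
  rpow_inv_natCast_pow (Finset.prod_nonneg fun i _ => ha i) (Fintype.card_ne_zero (α := ι))

theorem le_geomMean [Nonempty ι] {c : ℝ} (hc : 0 ≤ c) (h : ∀ i, c ≤ a i) :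
    c ≤ geomMean a := by
  have ha i : 0 ≤ a i := hc.trans (h i)
  refine le_of_pow_le_pow_left₀ (Fintype.card_ne_zero (α := ι)) (geomMean_nonneg ha) ?_
  rw [geomMean_pow_card ha]
  have := Finset.prod_le_prod (s := Finset.univ) (fun i _ => hc) fun i _ => h i
  rwa [Finset.prod_const, Finset.card_univ] at this

theorem geomMean_le [Nonempty ι] {c : ℝ} (ha : ∀ i, 0 ≤ a i) (h : ∀ i, a i ≤ c) :
    geomMean a ≤ c := by
  refine le_of_pow_le_pow_left₀ (Fintype.card_ne_zero (α := ι))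
    ((ha (Classical.arbitrary ι)).trans (h _)) ?_
  rw [geomMean_pow_card ha]
  have := Finset.prod_le_prod (s := Finset.univ) (fun i _ => ha i) fun i _ => h i
  rwa [Finset.prod_const, Finset.card_univ] at this

theorem prod_div_geomMean (ha : ∀ i, 0 < a i) :
    ∏ i, a i / geomMean a = 1 := by
  rcases isEmpty_or_nonempty ι with hι | hι
  · simp
  rw [Finset.prod_div_distrib, Finset.prod_const, Finset.card_univ,
    geomMean_pow_card fun i => (ha i).le, div_self (Finset.prod_pos fun i _ => ha i).ne']

theorem div_geomMean_le (ha : ∀ i, 0 < a i) (hQ : ∀ i j, a i ≤ Q * a j)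
    (i : ι) : a i / geomMean a ≤ Q := by
  have : Nonempty ι := ⟨i⟩
  have hQ0 : 0 < Q := pos_of_mul_pos_left ((ha i).trans_le (hQ i i)) (ha i).le
  rw [div_le_iff₀ (geomMean_pos ha), ← div_le_iff₀' hQ0]
  exact le_geomMean (by have := ha i; positivity) fun j => (div_le_iff₀' hQ0).mpr (hQ i j)

theorem geomMean_div_le (ha : ∀ i, 0 < a i) (hQ : ∀ i j, a i ≤ Q * a j)
    (i : ι) : geomMean a / a i ≤ Q := by
  have : Nonempty ι := ⟨i⟩
  rw [div_le_iff₀ (ha i)]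
  exact geomMean_le (fun j => (ha j).le) fun j => hQ j i

def normalizedSqrt (a : ι → ℝ) (i : ι) : ℝ := √(a i / geomMean a)

theorem normalizedSqrt_pos (ha : ∀ i, 0 < a i) (i : ι) : 0 < normalizedSqrt a i :=
  sqrt_pos.mpr (div_pos (ha i) (geomMean_pos ha))

theorem inv_normalizedSqrt (i : ι) : (normalizedSqrt a i)⁻¹ = √(geomMean a / a i) := by
  rw [normalizedSqrt, ← sqrt_inv, inv_div]

theorem prod_normalizedSqrt (ha : ∀ i, 0 < a i) : ∏ i, normalizedSqrt a i = 1 := by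
  unfold normalizedSqrt
  rw [← sqrt_prod _ fun i _ => (div_pos (ha i) (geomMean_pos ha)).le,
    prod_div_geomMean ha, sqrt_one]

theorem normalizedSqrt_inv_mul_mul_inv (ha : ∀ i, 0 < a i) :
    (normalizedSqrt a)⁻¹ * a * (normalizedSqrt a)⁻¹ = fun _ => geomMean a := funext fun i => by
  rw [Pi.mul_apply, Pi.mul_apply, Pi.inv_apply, inv_normalizedSqrt, mul_right_comm,
    mul_self_sqrt (div_pos (geomMean_pos ha) (ha i)).le, div_mul_cancel₀ _ (ha i).ne']

theorem abs_normalizedSqrt_le (ha : ∀ i, 0 < a i) (hQ : ∀ i j, a i ≤ Q * a j) (i : ι) :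
    |normalizedSqrt a i| ≤ √Q := by
  rw [abs_of_pos (normalizedSqrt_pos ha i)]
  exact sqrt_le_sqrt (div_geomMean_le ha hQ i)

theorem abs_inv_normalizedSqrt_le (ha : ∀ i, 0 < a i) (hQ : ∀ i j, a i ≤ Q * a j)
    (i : ι) : |(normalizedSqrt a)⁻¹ i| ≤ √Q := by
  rw [Pi.inv_apply, inv_normalizedSqrt, abs_of_nonneg (sqrt_nonneg _)]
  exact sqrt_le_sqrt (geomMean_div_le ha hQ i)

end GeomMean

section DiagMap

variable {ι E : Type*} [Fintype ι] [NormedAddCommGroup E] [InnerProductSpace ℝ E]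

namespace OrthonormalBasis

variable (b : OrthonormalBasis ι ℝ E) in
def diagMap (f : ι → ℝ) : E →L[ℝ] E := ∑ i, f i • rankOne ℝ (b i) (b i)

variable {b : OrthonormalBasis ι ℝ E}

theorem diagMap_apply (f : ι → ℝ) (x : E) :
    b.diagMap f x = ∑ i, (f i * ⟪b i, x⟫) • b i := by
  simp [diagMap, rankOne_apply, smul_smul]

theorem inner_diagMap_apply (f : ι → ℝ) (x y : E) :
    ⟪b.diagMap f x, y⟫ = ∑ i, f i * ⟪b i, x⟫ * ⟪b i, y⟫ := by
  simp [diagMap_apply, sum_inner, real_inner_smul_left]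

theorem diagMap_apply_self (f : ι → ℝ) (j : ι) : b.diagMap f (b j) = f j • b j := by
  classical
  simp [diagMap_apply, orthonormal_iff_ite.mp b.orthonormal, ite_smul]

theorem isSymmetric_diagMap (f : ι → ℝ) : (b.diagMap f : E →ₗ[ℝ] E).IsSymmetric := by
  intro x y
  simp only [ContinuousLinearMap.coe_coe]
  rw [real_inner_comm (b.diagMap f y) x, inner_diagMap_apply, inner_diagMap_apply]
  exact Finset.sum_congr rfl fun i _ => by ring

theorem inner_basis_diagMap_apply (f : ι → ℝ) (x : E) (j : ι) :
    ⟪b j, b.diagMap f x⟫ = f j * ⟪b j, x⟫ := by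
  have h := (b.isSymmetric_diagMap f (b j) x).symm
  simp only [ContinuousLinearMap.coe_coe] at h
  rw [h, diagMap_apply_self, real_inner_smul_left]

theorem ext_of_apply_eq {A B : E →L[ℝ] E} (h : ∀ i, A (b i) = B (b i)) : A = B :=
  ContinuousLinearMap.coe_injective (b.toBasis.ext fun i => by simpa using h i)

theorem diagMap_comp (f g : ι → ℝ) : b.diagMap f ∘L b.diagMap g = b.diagMap (f * g) :=
  b.ext_of_apply_eq fun i => by
    simp [diagMap_apply_self, smul_smul, mul_comm]

theorem diagMap_const (c : ℝ) : b.diagMap (fun _ => c) = c • ContinuousLinearMap.id ℝ E :=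
  b.ext_of_apply_eq fun i => by simp [diagMap_apply_self]

theorem diagMap_one : b.diagMap 1 = ContinuousLinearMap.id ℝ E :=
  (diagMap_const 1).trans (one_smul ℝ _)

theorem det_diagMap (f : ι → ℝ) : LinearMap.det (b.diagMap f : E →ₗ[ℝ] E) = ∏ i, f i := by
  classical
  rw [← LinearMap.det_toMatrix b.toBasis, ← Matrix.det_diagonal]
  congr 1
  ext i j
  rw [LinearMap.toMatrix_apply, b.coe_toBasis, ContinuousLinearMap.coe_coe, diagMap_apply_self,
    b.coe_toBasis_repr_apply, map_smul, b.repr_self]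
  rcases eq_or_ne i j with rfl | hij <;> simp [*]

theorem inner_diagMap_apply_diagMap_apply (f g : ι → ℝ) (x : E) :
    ⟪b.diagMap f (b.diagMap g x), b.diagMap g x⟫ = ⟪b.diagMap (g * f * g) x, x⟫ := by
  rw [← diagMap_comp, ← diagMap_comp]
  exact (b.isSymmetric_diagMap g _ x).symm

theorem inner_diagMap_apply_self_pos {f : ι → ℝ} (hf : ∀ i, 0 < f i) {x : E} (hx : x ≠ 0) :
    0 < ⟪b.diagMap f x, x⟫ := by
  rw [inner_diagMap_apply]
  obtain ⟨i, -, hi⟩ : ∃ i ∈ Finset.univ, ⟪b i, x⟫ ^ 2 ≠ 0 :=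
    Finset.exists_ne_zero_of_sum_ne_zero (by rw [b.sum_sq_inner_right]; positivity)
  refine Finset.sum_pos' (fun i _ => ?_) ⟨i, Finset.mem_univ i, ?_⟩
  · rw [mul_assoc]; exact mul_nonneg (hf i).le (mul_self_nonneg _)
  · rw [mul_assoc, ← sq]; exact mul_pos (hf i) (lt_of_le_of_ne (sq_nonneg _) hi.symm)

theorem norm_diagMap_le {f : ι → ℝ} {C : ℝ} (hC : 0 ≤ C) (hf : ∀ i, |f i| ≤ C) :
    ‖b.diagMap f‖ ≤ C := by
  refine ContinuousLinearMap.opNorm_le_bound _ hC fun x => ?_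
  refine le_of_sq_le_sq ?_ (by positivity)
  rw [mul_pow, ← b.sum_sq_inner_right, ← b.sum_sq_inner_right, Finset.mul_sum]
  refine Finset.sum_le_sum fun i _ => ?_
  rw [inner_basis_diagMap_apply, mul_pow]
  exact mul_le_mul_of_nonneg_right (sq_le_sq' (neg_le_of_abs_le (hf i)) (le_of_abs_le (hf i)))
    (sq_nonneg _)

theorem diagMap_comp_diagMap_inv {f : ι → ℝ} (hf : ∀ i, f i ≠ 0) :
    b.diagMap f ∘L b.diagMap f⁻¹ = ContinuousLinearMap.id ℝ E := by
  rw [diagMap_comp, ← diagMap_one (b := b)]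
  exact congrArg _ (funext fun i => mul_inv_cancel₀ (hf i))

variable (b) in
def diagEquiv {f : ι → ℝ} (hf : ∀ i, f i ≠ 0) : E ≃L[ℝ] E :=
  .equivOfInverse' (b.diagMap f) (b.diagMap f⁻¹) (diagMap_comp_diagMap_inv hf)
    (by simpa using diagMap_comp_diagMap_inv (b := b) (f := f⁻¹) (by simpa using hf))

end OrthonormalBasis

theorem ContinuousLinearMap.eq_diagMap_eigenvectorBasis [FiniteDimensional ℝ E] {M : E →L[ℝ] E}
    (hM : (M : E →ₗ[ℝ] E).IsSymmetric) {n : ℕ} (hn : finrank ℝ E = n) :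
    M = (hM.eigenvectorBasis hn).diagMap (hM.eigenvalues hn) :=
  (hM.eigenvectorBasis hn).ext_of_apply_eq fun i => by
    rw [OrthonormalBasis.diagMap_apply_self]
    exact hM.apply_eigenvectorBasis hn i

end DiagMap

section Inclusions

variable {𝕜 E F : Type*} [NontriviallyNormedField 𝕜] [NormedAddCommGroup E] [NormedSpace 𝕜 E]
  [NormedAddCommGroup F] [NormedSpace 𝕜 F]

theorem ContinuousLinearEquiv.closedBall_subset_symm_image {T : E ≃L[𝕜] F} {q r : ℝ}
    (hq : 0 < q) (hT : ‖(T : E →L[𝕜] F)‖ ≤ q) {K : Set F} (hK : closedBall 0 r ⊆ K) :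
    closedBall 0 (r * q⁻¹) ⊆ T.symm '' K := by
  intro x hx
  refine ⟨T x, hK ?_, T.symm_apply_apply x⟩
  rw [mem_closedBall_zero_iff] at hx ⊢
  calc ‖T x‖ ≤ q * ‖x‖ := (T : E →L[𝕜] F).le_of_opNorm_le hT x
    _ ≤ q * (r * q⁻¹) := by gcongr
    _ = r := by field_simp

theorem ContinuousLinearMap.image_subset_closedBall {A : E →L[𝕜] F} {q R : ℝ} (hA : ‖A‖ ≤ q)
    {K : Set E} (hK : K ⊆ closedBall 0 R) : A '' K ⊆ closedBall 0 (R * q) := by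
  rintro _ ⟨x, hx, rfl⟩
  have hx := mem_closedBall_zero_iff.mp (hK hx)
  rw [mem_closedBall_zero_iff]
  calc ‖A x‖ ≤ q * ‖x‖ := A.le_of_opNorm_le hA x
    _ ≤ R * q := by rw [mul_comm]; gcongr; exact (norm_nonneg _).trans hA

end Inclusions

section SecondMoment

variable {E : Type*} [NormedAddCommGroup E] [InnerProductSpace ℝ E] [FiniteDimensional ℝ E]
  [MeasurableSpace E] [BorelSpace E] {μ : Measure E}

def secondMoment (μ : Measure E) : E →L[ℝ] E := ∫ y, rankOne ℝ y y ∂μ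

theorem integrable_rankOne_self (hμ : Integrable (fun y => ‖y‖ ^ 2) μ) :
    Integrable (fun y => rankOne ℝ y y) μ :=
  hμ.mono ((rankOne ℝ).continuous.clm_apply continuous_id).aestronglyMeasurable
    (ae_of_all _ fun y => by simp [sq])

theorem inner_secondMoment_apply (hμ : Integrable (fun y => ‖y‖ ^ 2) μ)
    (x z : E) : ⟪secondMoment μ x, z⟫ = ∫ y, ⟪x, y⟫ * ⟪z, y⟫ ∂μ := by
  have hint := integrable_rankOne_self hμ
  rw [secondMoment, ContinuousLinearMap.integral_apply hint, real_inner_comm,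
    ← integral_inner (hint.apply_continuousLinearMap x)]
  simp [real_inner_smul_right, real_inner_comm]

theorem isSymmetric_secondMoment (hμ : Integrable (fun y => ‖y‖ ^ 2) μ) :
    (secondMoment μ : E →ₗ[ℝ] E).IsSymmetric := fun x z => by
  simp only [ContinuousLinearMap.coe_coe]
  rw [inner_secondMoment_apply hμ, real_inner_comm, inner_secondMoment_apply hμ]
  simp_rw [mul_comm]

theorem inner_secondMoment_apply_self (hμ : Integrable (fun y => ‖y‖ ^ 2) μ)
    (x : E) : ⟪secondMoment μ x, x⟫ = ∫ y, ⟪x, y⟫ ^ 2 ∂μ := by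
  simp_rw [inner_secondMoment_apply hμ, sq]

theorem setIntegral_image_inner_sq {K : Set E} (hK : MeasurableSet K) (A : E ≃L[ℝ] E) (x : E) :
    ∫ y in A '' K, ⟪x, y⟫ ^ 2 = |LinearMap.det (A : E →ₗ[ℝ] E)| * ∫ y in K, ⟪x, A y⟫ ^ 2 := by
  rw [integral_image_eq_integral_abs_det_fderiv_smul volume hK (f' := fun _ => (A : E →L[ℝ] E))
    (fun y _ => A.hasFDerivAt.hasFDerivWithinAt) A.injective.injOn]
  simp_rw [smul_eq_mul, integral_const_mul]
  rfl

theorem setIntegral_image_inner_sq_eq_inner_secondMoment {K : Set E} (hK : MeasurableSet K)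
    (hKint : IntegrableOn (fun y => ‖y‖ ^ 2) K) {A : E ≃L[ℝ] E}
    (hA : (A : E →ₗ[ℝ] E).IsSymmetric) (hdet : |LinearMap.det (A : E →ₗ[ℝ] E)| = 1) (x : E) :
    ∫ y in A '' K, ⟪x, y⟫ ^ 2 = ⟪secondMoment (volume.restrict K) (A x), A x⟫ := by
  rw [setIntegral_image_inner_sq hK, hdet, one_mul, inner_secondMoment_apply_self hKint]
  congr! 3 with y
  exact (hA x y).symm

theorem integrableOn_closedBall_inner_sq (θ : E) (r : ℝ) :
    IntegrableOn (fun y => ⟪θ, y⟫ ^ 2) (closedBall 0 r) :=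
  (by fun_prop : Continuous fun y : E => ⟪θ, y⟫ ^ 2).continuousOn.integrableOn_compact
    (isCompact_closedBall 0 r)

theorem setIntegral_closedBall_inner_sq (θ : E) {r : ℝ} (hr : 0 < r) :
    ∫ y in closedBall 0 r, ⟪θ, y⟫ ^ 2 =
      r ^ (finrank ℝ E + 2) * ∫ y in closedBall 0 1, ⟪θ, y⟫ ^ 2 := by
  have h := Measure.setIntegral_comp_smul_of_pos volume (fun y => ⟪θ, y⟫ ^ 2) (closedBall 0 1) hr
  simp only [real_inner_smul_right, mul_pow, integral_const_mul,
    smul_unitClosedBall_of_nonneg hr.le, smul_eq_mul] at h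
  rw [eq_inv_mul_iff_mul_eq₀ (by positivity)] at h
  rw [← h, pow_add]
  ring

theorem setIntegral_closedBall_inner_sq_congr {θ θ' : E} (h : ‖θ‖ = ‖θ'‖) (r : ℝ) :
    ∫ y in closedBall 0 r, ⟪θ, y⟫ ^ 2 = ∫ y in closedBall 0 r, ⟪θ', y⟫ ^ 2 := by
  set R := (ℝ ∙ (θ - θ'))ᗮ.reflection
  have hR : ∀ y, ⟪θ', y⟫ = ⟪θ, R y⟫ := fun y => by
    rw [← Submodule.reflection_sub h, ← R.inner_map_map, Submodule.reflection_reflection]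
  simp_rw [hR]
  have := R.measurePreserving.setIntegral_preimage_emb R.toHomeomorph.measurableEmbedding
    (fun y => ⟪θ, y⟫ ^ 2) (closedBall 0 r)
  simpa using this.symm

theorem setIntegral_closedBall_inner_sq_pos {θ : E} (hθ : θ ≠ 0) {r : ℝ} (hr : 0 < r) :
    0 < ∫ y in closedBall 0 r, ⟪θ, y⟫ ^ 2 := by
  have hcont : Continuous fun y : E => ⟪θ, y⟫ ^ 2 := by fun_prop
  rw [setIntegral_pos_iff_support_of_nonneg_ae (ae_of_all _ fun _ => sq_nonneg _)
    (integrableOn_closedBall_inner_sq θ r)]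
  refine (IsOpen.measure_pos volume (hcont.isOpen_support.inter isOpen_ball) ?_).trans_le
    (measure_mono (inter_subset_inter_right _ ball_subset_closedBall))
  refine ⟨(r / (2 * ‖θ‖)) • θ, ?_, ?_⟩
  · simp [real_inner_smul_right, hθ, hr.ne']
  · have := norm_pos_iff.mpr hθ
    rw [mem_ball_zero_iff, norm_smul, norm_of_nonneg (by positivity)]
    field_simp
    linarith

theorem setIntegral_inner_sq_mono {s t : Set E} {R : ℝ} (hst : s ⊆ t) (ht : t ⊆ closedBall 0 R)
    (θ : E) : ∫ y in s, ⟪θ, y⟫ ^ 2 ≤ ∫ y in t, ⟪θ, y⟫ ^ 2 :=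
  setIntegral_mono_set ((integrableOn_closedBall_inner_sq θ R).mono_set ht)
    (ae_of_all _ fun _ => sq_nonneg _) hst.eventuallyLE

theorem setIntegral_inner_sq_pos {K : Set E} {r R : ℝ} (hr : 0 < r) (hrK : closedBall 0 r ⊆ K)
    (hKR : K ⊆ closedBall 0 R) {θ : E} (hθ : θ ≠ 0) : 0 < ∫ y in K, ⟪θ, y⟫ ^ 2 :=
  (setIntegral_closedBall_inner_sq_pos hθ hr).trans_le (setIntegral_inner_sq_mono hrK hKR θ)

theorem setIntegral_inner_sq_le_mul [Nontrivial E] {K : Set E} {r R : ℝ} (hr : 0 < r)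
    (hrK : closedBall 0 r ⊆ K) (hKR : K ⊆ closedBall 0 R) {θ θ' : E} (h : ‖θ‖ = ‖θ'‖) :
    ∫ y in K, ⟪θ, y⟫ ^ 2 ≤ (R / r) ^ (finrank ℝ E + 2) * ∫ y in K, ⟪θ', y⟫ ^ 2 := by
  have hR : 0 < R := by
    obtain ⟨v, hv⟩ := exists_norm_eq E hr.le
    have := hrK.trans hKR (mem_closedBall_zero_iff.mpr hv.le)
    rw [mem_closedBall_zero_iff, hv] at this
    exact hr.trans_le this
  calc ∫ y in K, ⟪θ, y⟫ ^ 2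
      ≤ ∫ y in closedBall 0 R, ⟪θ, y⟫ ^ 2 := setIntegral_inner_sq_mono hKR subset_rfl θ
    _ = (R / r) ^ (finrank ℝ E + 2) * ∫ y in closedBall 0 r, ⟪θ', y⟫ ^ 2 := by
        rw [setIntegral_closedBall_inner_sq θ hR, setIntegral_closedBall_inner_sq θ' hr,
          setIntegral_closedBall_inner_sq_congr h, div_pow]
        field_simp
    _ ≤ (R / r) ^ (finrank ℝ E + 2) * ∫ y in K, ⟪θ', y⟫ ^ 2 := by
        gcongr ?_ * ?_
        exact setIntegral_inner_sq_mono hrK hKR θ'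


theorem exists_isotropic_position {K : Set E} (hK : MeasurableSet K)
    (hKint : IntegrableOn (fun y => ‖y‖ ^ 2) K) {Q : ℝ}
    (hpos : ∀ θ : E, ‖θ‖ = 1 → 0 < ∫ y in K, ⟪θ, y⟫ ^ 2)
    (hQ : ∀ θ θ' : E, ‖θ‖ = 1 → ‖θ'‖ = 1 →
      ∫ y in K, ⟪θ, y⟫ ^ 2 ≤ Q * ∫ y in K, ⟪θ', y⟫ ^ 2) :
    ∃ T : E ≃L[ℝ] E, (T : E →ₗ[ℝ] E).IsSymmetric ∧ (∀ x, x ≠ 0 → 0 < ⟪T x, x⟫) ∧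
      LinearMap.det (T : E →ₗ[ℝ] E) = 1 ∧ ‖(T : E →L[ℝ] E)‖ ≤ √Q ∧
      ‖(T.symm : E →L[ℝ] E)‖ ≤ √Q ∧
      ∃ c, 0 < c ∧ ∀ x, ∫ y in T.symm '' K, ⟪x, y⟫ ^ 2 = c * ‖x‖ ^ 2 := by
  have hM := isSymmetric_secondMoment hKint
  set b := hM.eigenvectorBasis rfl
  set a := hM.eigenvalues rfl
  have hMa : secondMoment (volume.restrict K) = b.diagMap a :=
    ContinuousLinearMap.eq_diagMap_eigenvectorBasis hM rfl
  have ha i : a i = ∫ y in K, ⟪b i, y⟫ ^ 2 := by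
    rw [← inner_secondMoment_apply_self hKint, hMa, OrthonormalBasis.diagMap_apply_self,
      real_inner_smul_left, real_inner_self_eq_norm_sq, b.orthonormal.1 i, one_pow, mul_one]
  have hapos i : 0 < a i := ha i ▸ hpos _ (b.orthonormal.1 i)
  have haQ i j : a i ≤ Q * a j := by
    rw [ha, ha]; exact hQ _ _ (b.orthonormal.1 i) (b.orthonormal.1 j)
  let T := b.diagEquiv fun i => (normalizedSqrt_pos hapos i).ne'
  have hdet : LinearMap.det (T.symm : E →ₗ[ℝ] E) = 1 := by
    show LinearMap.det (b.diagMap (normalizedSqrt a)⁻¹ : E →ₗ[ℝ] E) = 1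
    rw [OrthonormalBasis.det_diagMap, Pi.inv_def, Finset.prod_inv_distrib,
      prod_normalizedSqrt hapos, inv_one]
  refine ⟨T, b.isSymmetric_diagMap _,
    fun x hx => b.inner_diagMap_apply_self_pos (normalizedSqrt_pos hapos) hx,
    (b.det_diagMap _).trans (prod_normalizedSqrt hapos),
    b.norm_diagMap_le (sqrt_nonneg Q) (abs_normalizedSqrt_le hapos haQ),
    b.norm_diagMap_le (sqrt_nonneg Q) (abs_inv_normalizedSqrt_le hapos haQ),
    geomMean a, geomMean_pos hapos, fun x => ?_⟩
  rw [setIntegral_image_inner_sq_eq_inner_secondMoment hK hKint (b.isSymmetric_diagMap _)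
    (by rw [hdet, abs_one]), hMa]
  show ⟪b.diagMap a (b.diagMap _ x), b.diagMap _ x⟫ = _
  rw [OrthonormalBasis.inner_diagMap_apply_diagMap_apply, normalizedSqrt_inv_mul_mul_inv hapos,
    OrthonormalBasis.diagMap_const]
  simp [real_inner_smul_left]

end SecondMoment

/-- existence of the isotropic position for a body close to the
unit ball, with quantitative bounds. -/
theorem stmt_5 (n : ℕ) (hn : 2 ≤ n) (ε : ℝ) (hε : ε ∈ Ioo (0 : ℝ) 1)
    (K : Set (Eucl n)) (hK : IsSymmConvexBody K)
    (h1 : closedBall (0 : Eucl n) (1 - ε) ⊆ K)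
    (h2 : K ⊆ closedBall (0 : Eucl n) (1 + ε)) :
    ∃ T : Eucl n ≃L[ℝ] Eucl n,
      LinearMap.IsSymmetric (T : Eucl n →ₗ[ℝ] Eucl n) ∧
      (∀ x : Eucl n, x ≠ 0 → 0 < ⟪T x, x⟫) ∧
      LinearMap.det (T : Eucl n →ₗ[ℝ] Eucl n) = 1 ∧
      ‖(T : Eucl n →L[ℝ] Eucl n)‖ ≤ ((1 + ε) / (1 - ε)) ^ (((n : ℝ) + 2) / 2) ∧
      ‖(T.symm : Eucl n →L[ℝ] Eucl n)‖ ≤ ((1 + ε) / (1 - ε)) ^ (((n : ℝ) + 2) / 2) ∧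
      (∃ c : ℝ, 0 < c ∧ ∀ x : Eucl n,
        (∫ y in T.symm '' K, ⟪x, y⟫ ^ 2) = c * ‖x‖ ^ 2) ∧
      closedBall (0 : Eucl n) ((1 - ε) * ((1 - ε) / (1 + ε)) ^ (((n : ℝ) + 2) / 2)) ⊆
        T.symm '' K ∧
      T.symm '' K ⊆
        closedBall (0 : Eucl n) ((1 + ε) * ((1 + ε) / (1 - ε)) ^ (((n : ℝ) + 2) / 2)) := by
  obtain ⟨hε0, hε1⟩ := hε
  have hr : 0 < 1 - ε := by linarith
  have : NeZero n := ⟨by omega⟩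
  have hsqrt :
      √(((1 + ε) / (1 - ε)) ^ (n + 2)) = ((1 + ε) / (1 - ε)) ^ (((n : ℝ) + 2) / 2) := by
    rw [sqrt_eq_rpow, ← rpow_natCast, ← rpow_mul (by positivity)]
    congr 1
    push_cast; ring
  have hinv : ((1 - ε) / (1 + ε)) ^ (((n : ℝ) + 2) / 2) =
      (((1 + ε) / (1 - ε)) ^ (((n : ℝ) + 2) / 2))⁻¹ := by
    rw [← inv_rpow (by positivity), inv_div]
  have hint : IntegrableOn (fun y => ‖y‖ ^ 2) K :=
    (by fun_prop : Continuous fun y : Eucl n => ‖y‖ ^ 2).continuousOn.integrableOn_compact hK.2.1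
  obtain ⟨T, hsymm, hposdef, hdet, hT, hTsymm, hiso⟩ :=
    exists_isotropic_position (Q := ((1 + ε) / (1 - ε)) ^ (n + 2)) hK.2.1.measurableSet hint
      (fun θ hθ => setIntegral_inner_sq_pos hr h1 h2 (norm_ne_zero_iff.mp (by simp [hθ])))
      (fun θ θ' hθ hθ' => by
        simpa only [finrank_euclideanSpace_fin] using
          setIntegral_inner_sq_le_mul hr h1 h2 (hθ.trans hθ'.symm))
  rw [hsqrt] at hT hTsymm
  rw [hinv]
  exact ⟨T, hsymm, hposdef, hdet, hT, hTsymm, hiso,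
    T.closedBall_subset_symm_image (by positivity) hT h1,
    (T.symm : Eucl n →L[ℝ] Eucl n).image_subset_closedBall hTsymm h2⟩

end
end

section
/- Let n ≥ 2, δ ∈ (0, 1/25), and let K ⊂ ℝⁿ be an origin-symmetric convex body with (1−δ) B₂ⁿ ⊆ K ⊆ (1+δ) B₂ⁿ. Then the radial function ρ_K is Lipschitz on S^{n−1} with Lipschitz constant 5√δ, i.e., |ρ_K(x) − ρ_K(y)| ≤ 5√δ |x−y| for all x, y ∈ S^{n−1}. -/
open MeasureTheory Metric Set Real
open scoped ENNReal RealInnerProductSpace Pointwise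

noncomputable section

/-!
If `t > ρ_K(y)`, the point `t • y` is separated from `K` by a hyperplane with unit normal `ν`.
As `K` contains the ball of radius `r = 1 - δ` and lies in the ball of radius `R = 1 + δ`, this
forces `⟪y, ν⟫ ≥ r / R`, i.e. `‖ν - y‖ ≤ √(2 (1 - r / R)) ≤ 2√δ`: the normal is almost radial.
Testing the hyperplane against `ρ_K(x) • x ∈ K` then gives, up to the factor `R² / r`,
`ρ_K(x) - t ≤ ⟪y - x, ν⟫ ≤ ‖ν - y‖ ‖x - y‖ + ‖x - y‖² / 2`, which is `O(√δ ‖x - y‖)` once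
`‖x - y‖ ≤ √δ`. For larger `‖x - y‖` the trivial bound `ρ_K(x) - ρ_K(y) ≤ R - r = 2δ` suffices.
-/

section InnerProductSpace

variable {E : Type*} [NormedAddCommGroup E] [InnerProductSpace ℝ E]

theorem exists_norm_eq_one_inner_lt_of_notMem [CompleteSpace E] {K : Set E}
    (hconv : Convex ℝ K) (hclosed : IsClosed K) (hne : K.Nonempty) {p : E} (hp : p ∉ K) :
    ∃ ν : E, ‖ν‖ = 1 ∧ ∀ k ∈ K, ⟪k, ν⟫ < ⟪p, ν⟫ := by
  obtain ⟨f, u, hK, hp⟩ := geometric_hahn_banach_closed_point hconv hclosed hp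
  set w := (InnerProductSpace.toDual ℝ E).symm f
  have hf : ∀ z, ⟪z, w⟫ = f z := fun z => by
    rw [real_inner_comm]; exact InnerProductSpace.toDual_symm_apply
  have hw : 0 < ‖w‖ := by
    refine norm_pos_iff.2 fun hw0 => ?_
    have h0 : ∀ z, f z = 0 := fun z => by rw [← hf, hw0, inner_zero_right]
    obtain ⟨k, hk⟩ := hne
    linarith [hK k hk, h0 k, h0 p]
  refine ⟨‖w‖⁻¹ • w, by simp [norm_smul, hw.ne'], fun k hk => ?_⟩
  simp only [real_inner_smul_right, hf]
  exact mul_lt_mul_of_pos_left ((hK k hk).trans hp) (inv_pos.2 hw)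

theorem inner_sub_le_of_norm_eq_one {x y : E} (hx : ‖x‖ = 1) (hy : ‖y‖ = 1) (ν : E) :
    ⟪y - x, ν⟫ ≤ ‖ν - y‖ * ‖x - y‖ + ‖x - y‖ ^ 2 / 2 := by
  have hyy : ⟪y - x, y⟫ = ‖x - y‖ ^ 2 / 2 := by
    rw [norm_sub_sq_real, inner_sub_left, real_inner_self_eq_norm_sq, real_inner_comm, hx, hy]
    ring
  calc ⟪y - x, ν⟫ = ⟪y - x, ν - y⟫ + ⟪y - x, y⟫ := by rw [inner_sub_right]; ring
    _ ≤ ‖ν - y‖ * ‖x - y‖ + ‖x - y‖ ^ 2 / 2 := by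
      rw [hyy, norm_sub_rev x y, mul_comm]
      gcongr
      exact real_inner_le_norm _ _

theorem sub_le_of_forall_inner_lt {K : Set E} {r R s t : ℝ} {x y ν : E} (hr : 0 < r)
    (hball : closedBall (0 : E) r ⊆ K) (hx : ‖x‖ = 1) (hy : ‖y‖ = 1) (hν : ‖ν‖ = 1)
    (hs : s • x ∈ K) (hs0 : 0 ≤ s) (hsR : s ≤ R) (ht0 : 0 < t) (htR : t ≤ R)
    (hsep : ∀ k ∈ K, ⟪k, ν⟫ < t * ⟪y, ν⟫) :
    s - t ≤ R ^ 2 / r * (√(2 * (1 - r / R)) * ‖x - y‖ + ‖x - y‖ ^ 2 / 2) := by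
  set a := ⟪y, ν⟫
  set B := √(2 * (1 - r / R)) * ‖x - y‖ + ‖x - y‖ ^ 2 / 2
  have hR : 0 < R := ht0.trans_le htR
  have hra : r < t * a := by
    have hrν : r • ν ∈ K := hball (by simp [norm_smul, hν, abs_of_pos hr])
    simpa [real_inner_smul_left, real_inner_self_eq_norm_sq, hν] using hsep _ hrν
  have ha : r / R ≤ a := by
    rw [div_le_iff₀ hR]
    nlinarith
  have ha0 : 0 < a := (div_pos hr hR).trans_le ha
  have hνy : ‖ν - y‖ ≤ √(2 * (1 - r / R)) := by
    rw [← sqrt_sq (norm_nonneg _)]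
    refine sqrt_le_sqrt ?_
    rw [norm_sub_sq_real, hν, hy, real_inner_comm]
    linarith
  have hdrop : (s - t) * a ≤ s * B := by
    have hsx := hsep _ hs
    have hyx : s * ⟪y - x, ν⟫ ≤ s * B :=
      mul_le_mul_of_nonneg_left
        ((inner_sub_le_of_norm_eq_one hx hy ν).trans (by dsimp only [B]; gcongr)) hs0
    rw [real_inner_smul_left] at hsx
    rw [inner_sub_left] at hyx
    linarith
  calc s - t ≤ s * B / a := by rw [le_div_iff₀ ha0]; exact hdrop
    _ ≤ R * B / (r / R) := by gcongr
    _ = R ^ 2 / r * B := by field_simp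

end InnerProductSpace

section RadialFunction

variable {n : ℕ} {K : Set (Eucl n)} {r R : ℝ} {θ : Eucl n}

theorem le_of_smul_mem_of_subset_closedBall (hR : K ⊆ closedBall 0 R) (hθ : ‖θ‖ = 1) {t : ℝ}
    (ht0 : 0 < t) (ht : t • θ ∈ K) : t ≤ R := by
  have := mem_closedBall_zero_iff.1 (hR ht)
  rwa [norm_smul, hθ, mul_one, norm_of_nonneg ht0.le] at this

theorem smul_mem_of_closedBall_subset (hr : 0 < r) (hball : closedBall 0 r ⊆ K)
    (hθ : ‖θ‖ = 1) : r • θ ∈ K :=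
  hball (by simp [norm_smul, hθ, abs_of_pos hr])

theorem bddAbove_radial_of_subset_closedBall (hR : K ⊆ closedBall 0 R) (hθ : ‖θ‖ = 1) :
    BddAbove {t : ℝ | 0 < t ∧ t • θ ∈ K} :=
  ⟨R, fun _ ht => le_of_smul_mem_of_subset_closedBall hR hθ ht.1 ht.2⟩

theorem le_radFn (hr : 0 < r) (hball : closedBall 0 r ⊆ K) (hR : K ⊆ closedBall 0 R)
    (hθ : ‖θ‖ = 1) : r ≤ radFn K θ :=
  le_csSup (bddAbove_radial_of_subset_closedBall hR hθ)
    ⟨hr, smul_mem_of_closedBall_subset hr hball hθ⟩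

theorem radFn_le (hr : 0 < r) (hball : closedBall 0 r ⊆ K) (hR : K ⊆ closedBall 0 R)
    (hθ : ‖θ‖ = 1) : radFn K θ ≤ R :=
  csSup_le ⟨r, hr, smul_mem_of_closedBall_subset hr hball hθ⟩
    fun _ ht => le_of_smul_mem_of_subset_closedBall hR hθ ht.1 ht.2

theorem smul_notMem_of_radFn_lt (hR : K ⊆ closedBall 0 R) (hθ : ‖θ‖ = 1) {t : ℝ} (ht0 : 0 < t)
    (ht : radFn K θ < t) : t • θ ∉ K := fun htK =>
  ht.not_ge <| le_csSup (bddAbove_radial_of_subset_closedBall hR hθ) ⟨ht0, htK⟩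

theorem radFn_sub_le (hconv : Convex ℝ K) (hclosed : IsClosed K) (hr : 0 < r)
    (hball : closedBall 0 r ⊆ K) (hR : K ⊆ closedBall 0 R) {x y : Eucl n} (hx : ‖x‖ = 1)
    (hy : ‖y‖ = 1) :
    radFn K x - radFn K y ≤ R ^ 2 / r * (√(2 * (1 - r / R)) * ‖x - y‖ + ‖x - y‖ ^ 2 / 2) := by
  rw [sub_le_iff_le_add]
  refine csSup_le ⟨r, hr, smul_mem_of_closedBall_subset hr hball hx⟩ fun s ⟨hs0, hs⟩ => ?_
  have hsR := le_of_smul_mem_of_subset_closedBall hR hx hs0 hs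
  rw [add_comm, ← sub_le_iff_le_add]
  refine le_of_forall_gt_imp_ge_of_dense fun t ht => ?_
  rcases lt_or_ge R t with htR | htR
  · have : 0 ≤ R ^ 2 / r * (√(2 * (1 - r / R)) * ‖x - y‖ + ‖x - y‖ ^ 2 / 2) := by positivity
    linarith
  have ht0 : 0 < t := hr.trans_le ((le_radFn hr hball hR hy).trans ht.le)
  obtain ⟨ν, hν, hsep⟩ := exists_norm_eq_one_inner_lt_of_notMem hconv hclosed
    ⟨_, smul_mem_of_closedBall_subset hr hball hx⟩
    (smul_notMem_of_radFn_lt hR hy ht0 ht)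
  rw [sub_le_comm]
  exact sub_le_of_forall_inner_lt hr hball hx hy hν hs hs0.le hsR ht0 htR
    fun k hk => by simpa only [real_inner_smul_left] using hsep k hk

theorem radFn_sub_le_five_mul_sqrt {δ : ℝ} (hδ : δ ∈ Ioo (0 : ℝ) (1 / 25)) (hconv : Convex ℝ K)
    (hclosed : IsClosed K) (h1 : closedBall 0 (1 - δ) ⊆ K) (h2 : K ⊆ closedBall 0 (1 + δ))
    {x y : Eucl n} (hx : ‖x‖ = 1) (hy : ‖y‖ = 1) :
    radFn K x - radFn K y ≤ 5 * √δ * ‖x - y‖ := by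
  obtain ⟨hδ0, hδ1⟩ := hδ
  have hr : 0 < 1 - δ := by linarith
  have hsq : √δ * √δ = δ := mul_self_sqrt hδ0.le
  set e := ‖x - y‖
  rcases le_or_gt √δ e with he | he
  · have hxR := radFn_le hr h1 h2 hx
    have hyr := le_radFn hr h1 h2 hy
    nlinarith [sqrt_nonneg δ]
  have hgap : √(2 * (1 - (1 - δ) / (1 + δ))) ≤ 2 * √δ := by
    rw [show 2 * √δ = √(4 * δ) by rw [sqrt_mul' _ hδ0.le]; norm_num]
    refine sqrt_le_sqrt ?_
    rw [one_sub_div (by positivity : (1 + δ) ≠ 0)]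
    have : (1 + δ - (1 - δ)) / (1 + δ) ≤ 2 * δ := by
      rw [div_le_iff₀ (by positivity)]; nlinarith
    linarith
  have hratio : (1 + δ) ^ 2 / (1 - δ) ≤ 2 := by
    rw [div_le_iff₀ hr]; nlinarith
  calc radFn K x - radFn K y
      ≤ (1 + δ) ^ 2 / (1 - δ) * (√(2 * (1 - (1 - δ) / (1 + δ))) * e + e ^ 2 / 2) :=
        radFn_sub_le hconv hclosed hr h1 h2 hx hy
    _ ≤ 2 * (2 * √δ * e + e ^ 2 / 2) := by gcongr
    _ ≤ 5 * √δ * e := by nlinarith [norm_nonneg (x - y)]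

end RadialFunction

theorem stmt_11_general (n : ℕ) (δ : ℝ) (hδ : δ ∈ Ioo (0 : ℝ) (1 / 25))
    (K : Set (Eucl n)) (hK : IsSymmConvexBody K)
    (h1 : closedBall (0 : Eucl n) (1 - δ) ⊆ K)
    (h2 : K ⊆ closedBall (0 : Eucl n) (1 + δ)) :
    ∀ x ∈ sphere (0 : Eucl n) 1, ∀ y ∈ sphere (0 : Eucl n) 1,
      |radFn K x - radFn K y| ≤ 5 * Real.sqrt δ * ‖x - y‖ := by
  intro x hx y hy
  rw [mem_sphere_zero_iff_norm] at hx hy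
  have hclosed : IsClosed K := hK.2.1.isClosed
  rw [abs_sub_le_iff]
  refine ⟨radFn_sub_le_five_mul_sqrt hδ hK.1 hclosed h1 h2 hx hy, ?_⟩
  rw [norm_sub_rev]
  exact radFn_sub_le_five_mul_sqrt hδ hK.1 hclosed h1 h2 hy hx

/-- the radial function of a body `δ`-close to the unit ball is
Lipschitz with constant `5√δ`. -/
theorem stmt_11 (n : ℕ) (hn : 2 ≤ n) (δ : ℝ) (hδ : δ ∈ Ioo (0 : ℝ) (1 / 25))
    (K : Set (Eucl n)) (hK : IsSymmConvexBody K)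
    (h1 : closedBall (0 : Eucl n) (1 - δ) ⊆ K)
    (h2 : K ⊆ closedBall (0 : Eucl n) (1 + δ)) :
    ∀ x ∈ sphere (0 : Eucl n) 1, ∀ y ∈ sphere (0 : Eucl n) 1,
      |radFn K x - radFn K y| ≤ 5 * Real.sqrt δ * ‖x - y‖ :=
  stmt_11_general n δ hδ K hK h1 h2

end
end

section
/- Let n ≥ 2, δ ∈ (0,1), and let K ⊂ ℝⁿ be a convex set with (1−δ) B₂ⁿ ⊆ K ⊆ (1+δ) B₂ⁿ. Then for every X ∈ K and every Y in the topological boundary of K, ⟨X − Y, Y⟩ ≤ 2√δ |X − Y|. -/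
open MeasureTheory Metric Set Real
open scoped ENNReal RealInnerProductSpace Pointwise

noncomputable section

/-!
Let `θ` be a unit outer normal of a supporting hyperplane of `K` at `Y` and `t = ⟪Y, θ⟫`.
Since `(1 - δ) θ ∈ K`, we get `t ≥ 1 - δ`, and `|Y| ≤ 1 + δ`, so the component of `Y`
orthogonal to `θ` has length `√(|Y|² - t²) ≤ √((1 + δ)² - (1 - δ)²) = 2√δ`.
Splitting `⟪X - Y, Y⟫ = t ⟪X - Y, θ⟫ + ⟪X - Y, Y - t θ⟫`, the first term is `≤ 0` because
`X` lies below the supporting hyperplane, and the second is at most `2√δ |X - Y|` by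
Cauchy–Schwarz.
-/

section InnerProductSpace

variable {E : Type*} [NormedAddCommGroup E] [InnerProductSpace ℝ E]

theorem Convex.exists_norm_eq_one_inner_le_of_notMem_interior [CompleteSpace E] {A : Set E}
    {x : E} (hA : Convex ℝ A) (hx : x ∉ interior A) (hAint : (interior A).Nonempty) :
    ∃ θ : E, ‖θ‖ = 1 ∧ ∀ a ∈ A, ⟪a, θ⟫ ≤ ⟪x, θ⟫ := by
  obtain ⟨f, hf0, hf⟩ := geometric_hahn_banach_of_nonempty_interior_point hA hx hAint
  set v := (InnerProductSpace.toDual ℝ E).symm f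
  have hv : ∀ y, ⟪y, v⟫ = f y := fun y => by
    rw [real_inner_comm]; exact InnerProductSpace.toDual_symm_apply
  have hv0 : v ≠ 0 := by simpa [v] using hf0
  refine ⟨‖v‖⁻¹ • v, norm_smul_inv_norm hv0, fun a ha => ?_⟩
  simp only [real_inner_smul_right, hv]
  exact mul_le_mul_of_nonneg_left (hf a ha) (by positivity)

theorem inner_sub_le_norm_mul_norm_sub_smul {x y θ : E} {c : ℝ} (hc : 0 ≤ c)
    (hxy : ⟪x - y, θ⟫ ≤ 0) : ⟪x - y, y⟫ ≤ ‖x - y‖ * ‖y - c • θ‖ :=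
  calc ⟪x - y, y⟫ = c * ⟪x - y, θ⟫ + ⟪x - y, y - c • θ⟫ := by
        rw [inner_sub_right, real_inner_smul_right]; ring
    _ ≤ ⟪x - y, y - c • θ⟫ := by linarith [mul_nonpos_of_nonneg_of_nonpos hc hxy]
    _ ≤ ‖x - y‖ * ‖y - c • θ‖ := real_inner_le_norm _ _

theorem norm_sub_inner_smul_sq {y θ : E} (hθ : ‖θ‖ = 1) :
    ‖y - ⟪y, θ⟫ • θ‖ ^ 2 = ‖y‖ ^ 2 - ⟪y, θ⟫ ^ 2 := by
  rw [norm_sub_sq_real, real_inner_smul_right, norm_smul, hθ, Real.norm_eq_abs, mul_one, sq_abs]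
  ring

end InnerProductSpace

theorem stmt_12_general (n : ℕ) (δ : ℝ) (hδ : δ ∈ Ioo (0 : ℝ) 1)
    (K : Set (Eucl n)) (hK : Convex ℝ K)
    (h1 : closedBall (0 : Eucl n) (1 - δ) ⊆ K)
    (h2 : K ⊆ closedBall (0 : Eucl n) (1 + δ))
    (X : Eucl n) (hX : X ∈ K) (Y : Eucl n) (hY : Y ∈ frontier K) :
    ⟪X - Y, Y⟫ ≤ 2 * Real.sqrt δ * ‖X - Y‖ := by
  obtain ⟨hδ0, hδ1⟩ := hδ
  have hball : ball (0 : Eucl n) (1 - δ) ⊆ interior K :=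
    interior_maximal (ball_subset_closedBall.trans h1) isOpen_ball
  obtain ⟨θ, hθ, hsupp⟩ := hK.exists_norm_eq_one_inner_le_of_notMem_interior hY.2
    ⟨0, hball (mem_ball_self (by linarith))⟩
  have ht : 1 - δ ≤ ⟪Y, θ⟫ := by
    have hmem : (1 - δ) • θ ∈ K :=
      h1 (mem_closedBall_zero_iff.2 (by rw [norm_smul, hθ, norm_of_nonneg (by linarith), mul_one]))
    simpa [real_inner_smul_left, hθ] using hsupp _ hmem
  have hYnorm : ‖Y‖ ≤ 1 + δ :=
    mem_closedBall_zero_iff.1 (closure_minimal h2 isClosed_closedBall hY.1)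
  have hperp : ‖Y - ⟪Y, θ⟫ • θ‖ ≤ 2 * √δ := by
    rw [← sq_le_sq₀ (norm_nonneg _) (by positivity), norm_sub_inner_smul_sq hθ, mul_pow,
      sq_sqrt hδ0.le]
    nlinarith [norm_nonneg Y]
  calc ⟪X - Y, Y⟫ ≤ ‖X - Y‖ * ‖Y - ⟪Y, θ⟫ • θ‖ :=
        inner_sub_le_norm_mul_norm_sub_smul (by linarith)
          (by rw [inner_sub_left]; linarith [hsupp X hX])
    _ ≤ 2 * √δ * ‖X - Y‖ := by rw [mul_comm]; gcongr

/-- the key inequality `⟨X−Y, Y⟩ ≤ 2√δ |X−Y|` for a convex set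
squeezed between `(1−δ)B` and `(1+δ)B`. -/
theorem stmt_12 (n : ℕ) (hn : 2 ≤ n) (δ : ℝ) (hδ : δ ∈ Ioo (0 : ℝ) 1)
    (K : Set (Eucl n)) (hK : Convex ℝ K)
    (h1 : closedBall (0 : Eucl n) (1 - δ) ⊆ K)
    (h2 : K ⊆ closedBall (0 : Eucl n) (1 + δ))
    (X : Eucl n) (hX : X ∈ K) (Y : Eucl n) (hY : Y ∈ frontier K) :
    ⟪X - Y, Y⟫ ≤ 2 * Real.sqrt δ * ‖X - Y‖ :=
  stmt_12_general n δ hδ K hK h1 h2 X hX Y hY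
end
end

section
/- Let n ≥ 3 and α, β ∈ ℝ. There exist constants C = C(n, α, β) > 0 and δ₀ = δ₀(n, α, β) ∈ (0,1) such that for every δ ∈ (0, δ₀) and every origin-symmetric convex body K ⊂ ℝⁿ with 1−δ ≤ ρ_K ≤ 1+δ on S^{n−1}, setting r₀ = ∫_{S^{n−1}} ρ_K dσ, one has for every θ ∈ S^{n−1}: | (R[ρ_K^α])(θ)^β − r₀^{αβ} − αβ r₀^{αβ−1} (R[ρ_K − r₀])(θ) | ≤ C δ (R[|ρ_K − r₀|])(θ). -/
open MeasureTheory Metric Set Real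
open scoped ENNReal RealInnerProductSpace Pointwise

noncomputable section

/-- The rotation-invariant probability measure on the unit sphere `S^{n-1}`
(normalized `(n-1)`-dimensional Hausdorff measure). -/
def sphσ (n : ℕ) : Measure (Eucl n) :=
  (μH[(n : ℝ) - 1] (sphere (0 : Eucl n) 1))⁻¹ •
    (μH[(n : ℝ) - 1]).restrict (sphere (0 : Eucl n) 1)

/-- The spherical cap `S_ϑ(e) = {x ∈ S^{n-1} : ⟨e,x⟩ ≥ cos ϑ}`. -/
def cap {n : ℕ} (e : Eucl n) (ϑ : ℝ) : Set (Eucl n) :=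
  {x ∈ sphere (0 : Eucl n) 1 | Real.cos ϑ ≤ ⟪e, x⟫}

/-- The normalized measure on the great subsphere `S^{n-1} ∩ θ^⊥`
(`(n-2)`-dimensional Hausdorff measure, normalized to a probability measure). -/
def subsphσ (n : ℕ) (θ : Eucl n) : Measure (Eucl n) :=
  (μH[(n : ℝ) - 2] (sphere (0 : Eucl n) 1 ∩ {x : Eucl n | ⟪x, θ⟫ = 0}))⁻¹ •
    (μH[(n : ℝ) - 2]).restrict (sphere (0 : Eucl n) 1 ∩ {x : Eucl n | ⟪x, θ⟫ = 0})

/-- The spherical Radon transform, normalized so that `R 1 = 1`. -/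
def radon (n : ℕ) (f : Eucl n → ℝ) (θ : Eucl n) : ℝ :=
  ∫ x, f x ∂(subsphσ n θ)

open Module ProbabilityTheory Topology

/-!
Both `σ` and `σ_θ` are probability measures: the unit sphere of a `(k + 1)`-dimensional inner
product space has positive `k`-dimensional Hausdorff measure because it projects onto a `k`-ball,
and finite measure because it is covered by the images of two `k`-balls under inverse
stereographic projections, which are Lipschitz there. The radial function of a symmetric convex
body is the reciprocal of its gauge, hence continuous on the sphere.

The estimate itself is two first-order Taylor expansions on `[1/2, 2]`. With `A = R[ρ_K^α](θ)`,
expanding `x ↦ x ^ α` around `r₀` and integrating against `σ_θ` gives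
`A = r₀^α + α r₀^(α-1) R[ρ_K - r₀] + O(δ R|ρ_K - r₀|)`, as `|ρ_K - r₀| ≤ 2δ`; it also gives
`|A - r₀^α| = O(R|ρ_K - r₀|) = O(δ)`. Expanding `u ↦ u ^ β` around `r₀^α` then costs
`O(|A - r₀^α|²) = O(δ R|ρ_K - r₀|)`.
-/

section SphereMeasure

variable {E : Type*} [NormedAddCommGroup E] [InnerProductSpace ℝ E]

lemma exists_norm_eq_one_of_finrank_eq_succ {k : ℕ} (hk : finrank ℝ E = k + 1) :
    ∃ v : E, ‖v‖ = 1 := by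
  have : Nontrivial E := Module.nontrivial_of_finrank_eq_succ hk
  exact exists_norm_eq E zero_le_one

lemma finrank_orthogonal_span_of_norm_eq_one {k : ℕ} (hk : finrank ℝ E = k + 1) {v : E}
    (hv : ‖v‖ = 1) : finrank ℝ (ℝ ∙ v)ᗮ = k := by
  have : Fact (finrank ℝ E = k + 1) := ⟨hk⟩
  exact Submodule.finrank_orthogonal_span_singleton (by rintro rfl; simp at hv)

lemma image_subtype_sphere_orthogonal (θ : E) :
    ((↑) : (ℝ ∙ θ)ᗮ → E) '' sphere 0 1 = sphere (0 : E) 1 ∩ {x | ⟪x, θ⟫ = 0} := by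
  ext x
  constructor
  · rintro ⟨w, hw, rfl⟩
    exact ⟨by simpa using hw, Submodule.mem_orthogonal_singleton_iff_inner_left.mp w.2⟩
  · rintro ⟨hx, hxθ⟩
    exact ⟨⟨x, Submodule.mem_orthogonal_singleton_iff_inner_left.mpr hxθ⟩, by simpa using hx, rfl⟩

variable [FiniteDimensional ℝ E] [MeasurableSpace E] [BorelSpace E]

lemma hausdorffMeasure_sphere_pos_s14 {k : ℕ} (hk : finrank ℝ E = k + 1) :
    0 < μH[k] (sphere (0 : E) 1) := by
  obtain ⟨v, hv⟩ := exists_norm_eq_one_of_finrank_eq_succ hk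
  set W := (ℝ ∙ v)ᗮ
  set P := W.orthogonalProjectionOnto
  have hball : ball (0 : W) 1 ⊆ P '' sphere 0 1 := by
    intro w hw
    rw [mem_ball_zero_iff] at hw
    have hwv : ⟪(w : E), v⟫ = 0 := Submodule.mem_orthogonal_singleton_iff_inner_left.mp w.2
    refine ⟨w + √(1 - ‖w‖ ^ 2) • v, ?_, ?_⟩
    · rw [mem_sphere_zero_iff_norm, ← sq_eq_sq₀ (norm_nonneg _) zero_le_one, norm_add_sq_real,
        inner_smul_right, hwv, norm_smul, Real.norm_eq_abs, hv, abs_of_nonneg (Real.sqrt_nonneg _),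
        mul_one, Real.sq_sqrt (by nlinarith [norm_nonneg w])]
      simp
    · rw [map_add, map_smul, Submodule.orthogonalProjectionOnto_mem_subspace_eq_self,
        Submodule.orthogonalProjectionOnto_orthogonalComplement_singleton_eq_zero, smul_zero,
        add_zero]
  have hW : (k : ℝ) = finrank ℝ W := by rw [finrank_orthogonal_span_of_norm_eq_one hk hv]
  have hpos : 0 < μH[k] (P '' sphere 0 1) := by
    rw [hW]
    exact (isOpen_ball.measure_pos _ (nonempty_ball.2 one_pos)).trans_le (measure_mono hball)
  exact (ENNReal.mul_pos_iff.mp (hpos.trans_le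
    (P.lipschitz.hausdorffMeasure_image_le (Nat.cast_nonneg k) _))).2

lemma hausdorffMeasure_hemisphere_lt_top {k : ℕ} (hk : finrank ℝ E = k + 1) {v : E}
    (hv : ‖v‖ = 1) : μH[k] {x ∈ sphere (0 : E) 1 | ⟪v, x⟫ ≤ 0} < ∞ := by
  set W := (ℝ ∙ v)ᗮ
  set g : W → E := stereoInvFunAux v ∘ (↑)
  have hcpt : IsCompact (closedBall (0 : W) 2) := isCompact_closedBall 0 2
  obtain ⟨L, hL⟩ := (((contDiff_stereoInvFunAux (v := v) (m := 1)).comp W.subtypeL.contDiff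
    ).locallyLipschitz.locallyLipschitzOn).exists_lipschitzOnWith_of_compact hcpt
  have hcover : {x ∈ sphere (0 : E) 1 | ⟪v, x⟫ ≤ 0} ⊆ g '' closedBall 0 2 := by
    rintro x ⟨hx, hxv⟩
    refine ⟨stereoToFun v x, ?_, ?_⟩
    · have hP : ‖W.orthogonalProjectionOnto x‖ ≤ 1 :=
        (W.norm_orthogonalProjectionOnto_apply_le x).trans_eq (mem_sphere_zero_iff_norm.mp hx)
      have hden : 1 ≤ 1 - ⟪v, x⟫ := by linarith
      rw [mem_closedBall_zero_iff, stereoToFun_apply, norm_smul, Real.norm_eq_abs,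
        innerSL_apply_apply, abs_of_pos (by positivity)]
      calc 2 / (1 - ⟪v, x⟫) * ‖W.orthogonalProjectionOnto x‖ ≤ 2 / 1 * 1 := by gcongr
        _ = 2 := by norm_num
    · have hne : x ≠ v := by rintro rfl; norm_num [hv] at hxv
      exact congrArg Subtype.val (stereo_left_inv hv (x := ⟨x, hx⟩) hne)
  have hW : (k : ℝ) = finrank ℝ W := by rw [finrank_orthogonal_span_of_norm_eq_one hk hv]
  calc μH[k] {x ∈ sphere (0 : E) 1 | ⟪v, x⟫ ≤ 0} ≤ μH[k] (g '' closedBall 0 2) :=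
        measure_mono hcover
    _ ≤ L ^ (k : ℝ) * μH[k] (closedBall (0 : W) 2) :=
        hL.hausdorffMeasure_image_le (Nat.cast_nonneg k)
    _ < ∞ := by
      refine ENNReal.mul_lt_top (by simp) ?_
      rw [hW]
      exact hcpt.measure_lt_top

lemma hausdorffMeasure_sphere_lt_top_s14 {k : ℕ} (hk : finrank ℝ E = k + 1) :
    μH[k] (sphere (0 : E) 1) < ∞ := by
  obtain ⟨v, hv⟩ := exists_norm_eq_one_of_finrank_eq_succ hk
  have hcover : sphere (0 : E) 1 ⊆ {x ∈ sphere (0 : E) 1 | ⟪v, x⟫ ≤ 0} ∪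
      {x ∈ sphere (0 : E) 1 | ⟪-v, x⟫ ≤ 0} := fun x hx => by
    rcases le_total ⟪v, x⟫ 0 with h | h
    · exact Or.inl ⟨hx, h⟩
    · exact Or.inr ⟨hx, by rwa [inner_neg_left, neg_nonpos]⟩
  exact (measure_mono hcover).trans_lt <| (measure_union_le _ _).trans_lt <|
    ENNReal.add_lt_top.2 ⟨hausdorffMeasure_hemisphere_lt_top hk hv,
      hausdorffMeasure_hemisphere_lt_top hk (by rwa [norm_neg])⟩

lemma isProbabilityMeasure_cond_sphere {k : ℕ} (hk : finrank ℝ E = k + 1) :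
    IsProbabilityMeasure (μH[k][|sphere (0 : E) 1]) :=
  cond_isProbabilityMeasure_of_finite (hausdorffMeasure_sphere_pos_s14 hk).ne'
    (hausdorffMeasure_sphere_lt_top_s14 hk).ne

end SphereMeasure

lemma isProbabilityMeasure_sphσ {n : ℕ} (hn : 1 ≤ n) : IsProbabilityMeasure (sphσ n) := by
  obtain ⟨k, rfl⟩ : ∃ k, n = k + 1 := ⟨n - 1, by omega⟩
  have hdim : ((k + 1 : ℕ) : ℝ) - 1 = k := by push_cast; ring
  rw [sphσ, hdim]
  exact isProbabilityMeasure_cond_sphere (by simp)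

lemma isProbabilityMeasure_subsphσ {n : ℕ} (hn : 2 ≤ n) {θ : Eucl n}
    (hθ : θ ∈ sphere (0 : Eucl n) 1) : IsProbabilityMeasure (subsphσ n θ) := by
  obtain ⟨k, rfl⟩ : ∃ k, n = k + 2 := ⟨n - 2, by omega⟩
  have hdim : ((k + 2 : ℕ) : ℝ) - 2 = k := by push_cast; ring
  have hW : finrank ℝ (ℝ ∙ θ)ᗮ = k + 1 :=
    finrank_orthogonal_span_of_norm_eq_one (k := k + 1) (by simp) (mem_sphere_zero_iff_norm.mp hθ)
  have hmeas : μH[(k : ℝ)] (sphere (0 : Eucl (k + 2)) 1 ∩ {x | ⟪x, θ⟫ = 0}) =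
      μH[(k : ℝ)] (sphere (0 : (ℝ ∙ θ)ᗮ) 1) := by
    rw [← image_subtype_sphere_orthogonal, isometry_subtype_coe.hausdorffMeasure_image
      (Or.inl (Nat.cast_nonneg k))]
  rw [subsphσ, hdim]
  exact cond_isProbabilityMeasure_of_finite (hmeas ▸ (hausdorffMeasure_sphere_pos_s14 hW).ne')
    (hmeas ▸ (hausdorffMeasure_sphere_lt_top_s14 hW).ne)

lemma ContinuousOn.integrable_cond {Y : Type*} [TopologicalSpace Y] [T2Space Y]
    [MeasurableSpace Y] [OpensMeasurableSpace Y] {μ : Measure Y} {s : Set Y} {g : Y → ℝ}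
    (hg : ContinuousOn g s) (hs : IsCompact s) : Integrable g μ[|s] := by
  rw [← Measure.restrict_eq_self_of_ae_mem (ae_cond_mem hs.measurableSet)]
  exact hg.integrableOn_compact hs

section RadialFunction

variable {n : ℕ} {K : Set (Eucl n)}

lemma radFn_eq_inv_gauge (hconv : Convex ℝ K) (hcl : IsClosed K) (h0 : K ∈ 𝓝 0) {θ : Eucl n}
    (hθ : 0 < gauge K θ) : radFn K θ = (gauge K θ)⁻¹ := by
  have hset : {t : ℝ | 0 < t ∧ t • θ ∈ K} = Ioc 0 (gauge K θ)⁻¹ := by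
    ext t
    refine and_congr_right fun ht => ?_
    rw [show t • θ ∈ K ↔ gauge K (t • θ) ≤ 1 by
      rw [gauge_le_one_iff_mem_closure hconv h0, hcl.closure_eq], gauge_smul_of_nonneg ht.le,
      smul_eq_mul, ← one_div, le_div_iff₀ hθ]
  rw [radFn, hset, csSup_Ioc (inv_pos.2 hθ)]

lemma IsSymmConvexBody.mem_nhds_zero (hK : IsSymmConvexBody K) : K ∈ 𝓝 0 := by
  obtain ⟨hconv, -, ⟨x, hx⟩, hsymm⟩ := hK
  have hnx : -x ∈ interior K :=
    interior_maximal ((neg_subset_neg.2 interior_subset).trans hsymm.symm.subset)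
      isOpen_interior.neg (neg_mem_neg.2 hx)
  have h := hconv.interior hx hnx (by norm_num : (0:ℝ) ≤ 1/2) (by norm_num : (0:ℝ) ≤ 1/2)
    (by norm_num)
  rw [← mem_interior_iff_mem_nhds]
  convert h using 1
  module

lemma IsSymmConvexBody.continuousOn_radFn (hK : IsSymmConvexBody K) :
    ContinuousOn (radFn K) {0}ᶜ := by
  have h0 := hK.mem_nhds_zero
  have hpos : ∀ θ ∈ ({0}ᶜ : Set (Eucl n)), 0 < gauge K θ := fun θ hθ =>
    (gauge_pos (absorbent_nhds_zero h0)
      (NormedSpace.isVonNBounded_iff ℝ |>.2 hK.2.1.isBounded)).2 hθ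
  refine ((continuous_gauge hK.1 h0).continuousOn.inv₀ fun θ hθ => (hpos θ hθ).ne').congr
    fun θ hθ => radFn_eq_inv_gauge hK.1 hK.2.1.isClosed h0 (hpos θ hθ)

end RadialFunction

def rpowLipConst (γ : ℝ) : ℝ := |γ| * 2 ^ |γ - 1|

lemma rpowLipConst_nonneg (γ : ℝ) : 0 ≤ rpowLipConst γ := by unfold rpowLipConst; positivity

lemma rpow_le_two_rpow_abs {x : ℝ} (hx : x ∈ Icc (1/2 : ℝ) 2) (p : ℝ) : x ^ p ≤ 2 ^ |p| := by
  have hx0 : 0 < x := by linarith [hx.1]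
  rcases le_or_gt 0 p with hp | hp
  · rw [abs_of_nonneg hp]
    exact rpow_le_rpow hx0.le hx.2 hp
  · rw [abs_of_neg hp, ← inv_inv x, inv_rpow (inv_pos.2 hx0).le, ← rpow_neg (inv_pos.2 hx0).le]
    refine rpow_le_rpow (by positivity) ?_ (by linarith)
    rw [inv_le_comm₀ hx0 two_pos]
    linarith [hx.1]

lemma abs_rpow_sub_rpow_le {a b : ℝ} (ha : a ∈ Icc (1/2 : ℝ) 2) (hb : b ∈ Icc (1/2 : ℝ) 2)
    (γ : ℝ) : |a ^ γ - b ^ γ| ≤ rpowLipConst γ * |a - b| := by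
  have hderiv : ∀ x ∈ Icc (1/2 : ℝ) 2,
      HasDerivWithinAt (fun x : ℝ => x ^ γ) (γ * x ^ (γ - 1)) (Icc (1/2) 2) x := fun x hx =>
    (hasDerivAt_rpow_const (Or.inl (by linarith [hx.1]))).hasDerivWithinAt
  have hbound : ∀ x ∈ Icc (1/2 : ℝ) 2, ‖γ * x ^ (γ - 1)‖ ≤ rpowLipConst γ := fun x hx => by
    rw [norm_mul, norm_of_nonneg (rpow_nonneg (by linarith [hx.1]) _)]
    exact mul_le_mul_of_nonneg_left (rpow_le_two_rpow_abs hx _) (norm_nonneg γ)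
  simpa only [norm_eq_abs] using
    (convex_Icc _ _).norm_image_sub_le_of_norm_hasDerivWithin_le hderiv hbound hb ha

/-- The constant is the Lipschitz constant of the derivative `γ x ^ (γ - 1)` on `[1/2, 2]`. -/
lemma abs_rpow_sub_rpow_sub_mul_le {a b : ℝ} (ha : a ∈ Icc (1/2 : ℝ) 2)
    (hb : b ∈ Icc (1/2 : ℝ) 2) (γ : ℝ) :
    |a ^ γ - b ^ γ - γ * b ^ (γ - 1) * (a - b)| ≤ |γ| * rpowLipConst (γ - 1) * |a - b| ^ 2 := by
  set c := γ * b ^ (γ - 1)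
  have hsub : uIcc a b ⊆ Icc (1/2 : ℝ) 2 := uIcc_subset_Icc ha hb
  have hderiv : ∀ x ∈ uIcc a b, HasDerivWithinAt (fun x : ℝ => x ^ γ - c * x)
      (γ * x ^ (γ - 1) - c) (uIcc a b) x := fun x hx =>
    ((hasDerivAt_rpow_const (Or.inl (by linarith [(hsub hx).1]))).sub
      ((hasDerivAt_id x).const_mul c |>.congr_deriv (mul_one c))).hasDerivWithinAt
  have hbound : ∀ x ∈ uIcc a b, ‖γ * x ^ (γ - 1) - c‖ ≤ |γ| * rpowLipConst (γ - 1) * |a - b| :=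
    fun x hx => by
      rw [norm_eq_abs, ← mul_sub, abs_mul, mul_assoc]
      gcongr
      calc |x ^ (γ - 1) - b ^ (γ - 1)| ≤ rpowLipConst (γ - 1) * |x - b| :=
            abs_rpow_sub_rpow_le (hsub hx) hb _
        _ ≤ rpowLipConst (γ - 1) * |a - b| := by
            gcongr ?_ * ?_
            · exact rpowLipConst_nonneg _
            · exact abs_sub_left_of_mem_uIcc (uIcc_comm a b ▸ hx)
  have := (convex_uIcc a b).norm_image_sub_le_of_norm_hasDerivWithin_le hderiv hbound
    right_mem_uIcc left_mem_uIcc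
  rw [norm_eq_abs, norm_eq_abs] at this
  calc |a ^ γ - b ^ γ - c * (a - b)| = |a ^ γ - c * a - (b ^ γ - c * b)| := by ring_nf
    _ ≤ |γ| * rpowLipConst (γ - 1) * |a - b| * |a - b| := this
    _ = |γ| * rpowLipConst (γ - 1) * |a - b| ^ 2 := by ring

lemma rpow_mem_Icc_of_mem_Icc {x δ γ : ℝ} (hx : x ∈ Icc (1 - δ) (1 + δ)) (hδ : δ ≤ 1/2)
    (hδγ : rpowLipConst γ * δ ≤ 1/2) : x ^ γ ∈ Icc (1/2 : ℝ) 2 := by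
  have hx' : x ∈ Icc (1/2 : ℝ) 2 := ⟨by linarith [hx.1], by linarith [hx.2]⟩
  have h1 : |x - 1| ≤ δ := abs_le.2 ⟨by linarith [hx.1], by linarith [hx.2]⟩
  have h := abs_rpow_sub_rpow_le hx' (by norm_num : (1 : ℝ) ∈ Icc (1/2 : ℝ) 2) γ
  rw [one_rpow] at h
  have h' := abs_le.1 (h.trans ((mul_le_mul_of_nonneg_left h1 (rpowLipConst_nonneg γ)).trans hδγ))
  constructor <;> linarith [h'.1, h'.2]

lemma abs_rpow_rpow_sub_linear_le (α β : ℝ) {u b e : ℝ} (hb : b ∈ Icc (1/2 : ℝ) 2)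
    (hbα : b ^ α ∈ Icc (1/2 : ℝ) 2) (hu : u ∈ Icc (1/2 : ℝ) 2) :
    |u ^ β - b ^ (α * β) - α * β * b ^ (α * β - 1) * e| ≤
      |β| * rpowLipConst (β - 1) * |u - b ^ α| ^ 2 +
        rpowLipConst β * |u - b ^ α - α * b ^ (α - 1) * e| := by
  have hb0 : 0 < b := by linarith [hb.1]
  have hpow : (b ^ α) ^ β = b ^ (α * β) := (rpow_mul hb0.le α β).symm
  have hpow' : (b ^ α) ^ (β - 1) * b ^ (α - 1) = b ^ (α * β - 1) := by
    rw [← rpow_mul hb0.le, ← rpow_add hb0]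
    ring_nf
  have hcoef : |β * (b ^ α) ^ (β - 1)| ≤ rpowLipConst β := by
    rw [abs_mul, abs_of_nonneg (rpow_nonneg (rpow_nonneg hb0.le α) _)]
    exact mul_le_mul_of_nonneg_left (rpow_le_two_rpow_abs hbα _) (abs_nonneg β)
  calc |u ^ β - b ^ (α * β) - α * β * b ^ (α * β - 1) * e|
      = |(u ^ β - (b ^ α) ^ β - β * (b ^ α) ^ (β - 1) * (u - b ^ α)) +
          β * (b ^ α) ^ (β - 1) * (u - b ^ α - α * b ^ (α - 1) * e)| := by
        rw [hpow, ← hpow']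
        ring_nf
    _ ≤ |u ^ β - (b ^ α) ^ β - β * (b ^ α) ^ (β - 1) * (u - b ^ α)| +
          |β * (b ^ α) ^ (β - 1)| * |u - b ^ α - α * b ^ (α - 1) * e| := by
        rw [← abs_mul]
        exact abs_add_le _ _
    _ ≤ _ := by
        gcongr
        · exact abs_rpow_sub_rpow_sub_mul_le hu hbα β

section ProbabilityMeasure

variable {X : Type*} [MeasurableSpace X] {ν : Measure X} [IsProbabilityMeasure ν] {f : X → ℝ}

lemma integral_mem_Icc_of_ae_mem {a b : ℝ} (hf : Integrable f ν)
    (h : ∀ᵐ x ∂ν, f x ∈ Icc a b) : ∫ x, f x ∂ν ∈ Icc a b :=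
  ⟨by simpa using integral_mono_ae (integrable_const a) hf (h.mono fun _ hx => hx.1),
    by simpa using integral_mono_ae hf (integrable_const b) (h.mono fun _ hx => hx.2)⟩

lemma integrable_of_ae_mem_Icc {a b : ℝ} (hf : AEStronglyMeasurable f ν)
    (h : ∀ᵐ x ∂ν, f x ∈ Icc a b) : Integrable f ν :=
  .of_bound hf (max |a| |b|) (h.mono fun _ hx => abs_le_max_abs_abs hx.1 hx.2)

lemma integrable_rpow_of_ae_mem_Icc (hf : AEStronglyMeasurable f ν)
    (hfI : ∀ᵐ x ∂ν, f x ∈ Icc (1/2 : ℝ) 2) (γ : ℝ) : Integrable (fun x => f x ^ γ) ν :=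
  integrable_of_ae_mem_Icc (hf.aemeasurable.pow_const γ).aestronglyMeasurable <|
    hfI.mono fun _ hx => ⟨rpow_nonneg (by linarith [hx.1]) _, rpow_le_two_rpow_abs hx γ⟩

lemma abs_integral_rpow_sub_le {b : ℝ} (hf : AEStronglyMeasurable f ν)
    (hfI : ∀ᵐ x ∂ν, f x ∈ Icc (1/2 : ℝ) 2) (hb : b ∈ Icc (1/2 : ℝ) 2) (γ : ℝ) :
    |∫ x, f x ^ γ ∂ν - b ^ γ| ≤ rpowLipConst γ * ∫ x, |f x - b| ∂ν := by
  have hdev : Integrable (fun x => f x - b) ν :=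
    (integrable_of_ae_mem_Icc hf hfI).sub (integrable_const b)
  calc |∫ x, f x ^ γ ∂ν - b ^ γ| = ‖∫ x, (f x ^ γ - b ^ γ) ∂ν‖ := by
        rw [integral_sub (integrable_rpow_of_ae_mem_Icc hf hfI γ) (integrable_const _),
          integral_const, probReal_univ, one_smul, norm_eq_abs]
    _ ≤ ∫ x, rpowLipConst γ * |f x - b| ∂ν := norm_integral_le_of_norm_le
        (hdev.abs.const_mul _) (hfI.mono fun x hx => abs_rpow_sub_rpow_le hx hb γ)
    _ = rpowLipConst γ * ∫ x, |f x - b| ∂ν := integral_const_mul _ _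

lemma abs_integral_rpow_sub_linear_le {b ε : ℝ} (hf : AEStronglyMeasurable f ν)
    (hfI : ∀ᵐ x ∂ν, f x ∈ Icc (1/2 : ℝ) 2) (hb : b ∈ Icc (1/2 : ℝ) 2)
    (hε : ∀ᵐ x ∂ν, |f x - b| ≤ ε) (γ : ℝ) :
    |∫ x, f x ^ γ ∂ν - b ^ γ - γ * b ^ (γ - 1) * ∫ x, (f x - b) ∂ν| ≤
      |γ| * rpowLipConst (γ - 1) * ε * ∫ x, |f x - b| ∂ν := by
  have hdev : Integrable (fun x => f x - b) ν :=
    (integrable_of_ae_mem_Icc hf hfI).sub (integrable_const b)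
  have hγ := integrable_rpow_of_ae_mem_Icc hf hfI γ
  have hγb : Integrable (fun x => f x ^ γ - b ^ γ) ν := hγ.sub (integrable_const _)
  calc |∫ x, f x ^ γ ∂ν - b ^ γ - γ * b ^ (γ - 1) * ∫ x, (f x - b) ∂ν|
      = ‖∫ x, (f x ^ γ - b ^ γ - γ * b ^ (γ - 1) * (f x - b)) ∂ν‖ := by
        rw [integral_sub hγb (hdev.const_mul _),
          integral_sub hγ (integrable_const _), integral_const_mul, integral_const, probReal_univ,
          one_smul, norm_eq_abs]
    _ ≤ ∫ x, |γ| * rpowLipConst (γ - 1) * ε * |f x - b| ∂ν :=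
        norm_integral_le_of_norm_le (hdev.abs.const_mul _) <| (hfI.and hε).mono fun x hx =>
          calc |f x ^ γ - b ^ γ - γ * b ^ (γ - 1) * (f x - b)|
              ≤ |γ| * rpowLipConst (γ - 1) * |f x - b| ^ 2 :=
                abs_rpow_sub_rpow_sub_mul_le hx.1 hb γ
            _ ≤ |γ| * rpowLipConst (γ - 1) * ε * |f x - b| := by
                rw [sq, ← mul_assoc]
                gcongr
                · exact mul_nonneg (abs_nonneg γ) (rpowLipConst_nonneg _)
                · exact hx.2
    _ = |γ| * rpowLipConst (γ - 1) * ε * ∫ x, |f x - b| ∂ν := integral_const_mul _ _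

theorem abs_integral_rpow_rpow_sub_linear_le (α β : ℝ) {δ r : ℝ}
    (hf : AEStronglyMeasurable f ν) (hfδ : ∀ᵐ x ∂ν, f x ∈ Icc (1 - δ) (1 + δ))
    (hr : r ∈ Icc (1 - δ) (1 + δ)) (hδ : δ ≤ 1/2) (hδα : rpowLipConst α * δ ≤ 1/2) :
    |(∫ x, f x ^ α ∂ν) ^ β - r ^ (α * β) - α * β * r ^ (α * β - 1) * ∫ x, (f x - r) ∂ν| ≤
      (2 * |β| * rpowLipConst (β - 1) * rpowLipConst α ^ 2 +
        2 * rpowLipConst β * |α| * rpowLipConst (α - 1)) * δ * ∫ x, |f x - r| ∂ν := by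
  have hI : ∀ {x}, x ∈ Icc (1 - δ) (1 + δ) → x ∈ Icc (1/2 : ℝ) 2 := fun hx =>
    ⟨by linarith [hx.1], by linarith [hx.2]⟩
  have hfI := hfδ.mono fun _ hx => hI hx
  have hnear : ∀ᵐ x ∂ν, |f x - r| ≤ 2 * δ := hfδ.mono fun _ hx =>
    abs_le.2 ⟨by linarith [hx.1, hr.2], by linarith [hx.2, hr.1]⟩
  have hA : ∫ x, f x ^ α ∂ν ∈ Icc (1/2 : ℝ) 2 :=
    integral_mem_Icc_of_ae_mem (integrable_rpow_of_ae_mem_Icc hf hfI α)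
      (hfδ.mono fun _ hx => rpow_mem_Icc_of_mem_Icc hx hδ hδα)
  have hF : ∫ x, |f x - r| ∂ν ∈ Icc 0 (2 * δ) :=
    integral_mem_Icc_of_ae_mem ((integrable_of_ae_mem_Icc hf hfI).sub (integrable_const r)).abs
      (hnear.mono fun _ hx => ⟨abs_nonneg _, hx⟩)
  have hlin := abs_integral_rpow_sub_linear_le hf hfI (hI hr) hnear α
  have hlip := abs_integral_rpow_sub_le hf hfI (hI hr) α
  have hlip' : |∫ x, f x ^ α ∂ν - r ^ α| ≤ rpowLipConst α * (2 * δ) :=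
    hlip.trans (mul_le_mul_of_nonneg_left hF.2 (rpowLipConst_nonneg α))
  calc _ ≤ |β| * rpowLipConst (β - 1) * |∫ x, f x ^ α ∂ν - r ^ α| ^ 2 +
        rpowLipConst β * |∫ x, f x ^ α ∂ν - r ^ α - α * r ^ (α - 1) * ∫ x, (f x - r) ∂ν| :=
      abs_rpow_rpow_sub_linear_le α β (hI hr) (rpow_mem_Icc_of_mem_Icc hr hδ hδα) hA
    _ ≤ |β| * rpowLipConst (β - 1) * ((rpowLipConst α * ∫ x, |f x - r| ∂ν) *
          (rpowLipConst α * (2 * δ))) +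
        rpowLipConst β * (|α| * rpowLipConst (α - 1) * (2 * δ) * ∫ x, |f x - r| ∂ν) := by
      rw [sq]
      gcongr
      · exact mul_nonneg (abs_nonneg β) (rpowLipConst_nonneg _)
      · exact mul_nonneg (rpowLipConst_nonneg α) hF.1
      · exact rpowLipConst_nonneg β
    _ = _ := by ring

end ProbabilityMeasure

/-- the linearization of `(R[ρ_K^α])^β` for bodies close to the
unit ball (Section 8). -/
theorem stmt_14 (n : ℕ) (hn : 3 ≤ n) (α β : ℝ) :
    ∃ C : ℝ, 0 < C ∧ ∃ δ₀ ∈ Ioo (0 : ℝ) 1, ∀ δ ∈ Ioo (0 : ℝ) δ₀,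
      ∀ K : Set (Eucl n), IsSymmConvexBody K →
        (∀ θ ∈ sphere (0 : Eucl n) 1, radFn K θ ∈ Icc (1 - δ) (1 + δ)) →
        ∀ θ ∈ sphere (0 : Eucl n) 1,
          |radon n (fun x => radFn K x ^ α) θ ^ β -
              (∫ φ, radFn K φ ∂(sphσ n)) ^ (α * β) -
              α * β * (∫ φ, radFn K φ ∂(sphσ n)) ^ (α * β - 1) *
                radon n (fun x => radFn K x - ∫ φ, radFn K φ ∂(sphσ n)) θ| ≤
            C * δ * radon n (fun x => |radFn K x - ∫ φ, radFn K φ ∂(sphσ n)|) θ := by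
  set C₀ := 2 * |β| * rpowLipConst (β - 1) * rpowLipConst α ^ 2 +
    2 * rpowLipConst β * |α| * rpowLipConst (α - 1)
  have hC₀ : 0 ≤ C₀ := by simp only [C₀, rpowLipConst]; positivity
  have hLα := rpowLipConst_nonneg α
  -- `δ₀` keeps `ρ_K`, `r₀` and their `α`-th powers inside `[1/2, 2]`.
  refine ⟨C₀ + 1, by positivity, 1 / (2 * rpowLipConst α + 2),
    ⟨by positivity, (div_lt_one (by positivity)).2 (by linarith)⟩,
    fun δ hδ K hK hρ θ hθ => ?_⟩
  have hδα := (lt_div_iff₀ (by positivity)).1 hδ.2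
  have hsph : IsCompact (sphere (0 : Eucl n) 1) := isCompact_sphere 0 1
  have hsub : IsCompact (sphere (0 : Eucl n) 1 ∩ {x | ⟪x, θ⟫ = 0}) :=
    hsph.inter_right (isClosed_eq (by fun_prop) continuous_const)
  have := isProbabilityMeasure_sphσ (by omega : 1 ≤ n)
  have := isProbabilityMeasure_subsphσ (by omega : 2 ≤ n) hθ
  have hcont : ContinuousOn (radFn K) (sphere (0 : Eucl n) 1) :=
    hK.continuousOn_radFn.mono fun x hx => by simp [ne_zero_of_mem_unit_sphere ⟨x, hx⟩]
  have hr₀ : ∫ φ, radFn K φ ∂(sphσ n) ∈ Icc (1 - δ) (1 + δ) :=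
    integral_mem_Icc_of_ae_mem (hcont.integrable_cond hsph)
      ((ae_cond_mem hsph.measurableSet).mono hρ)
  have hF : 0 ≤ radon n (fun x => |radFn K x - ∫ φ, radFn K φ ∂(sphσ n)|) θ :=
    integral_nonneg fun _ => abs_nonneg _
  calc _ ≤ C₀ * δ * radon n (fun x => |radFn K x - ∫ φ, radFn K φ ∂(sphσ n)|) θ :=
        abs_integral_rpow_rpow_sub_linear_le α β
          ((hcont.mono inter_subset_left).integrable_cond hsub).aestronglyMeasurable
          ((ae_cond_mem hsub.measurableSet).mono fun x hx => hρ x hx.1) hr₀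
          (by nlinarith [hδ.1]) (by nlinarith [hδ.1])
    _ ≤ (C₀ + 1) * δ * radon n (fun x => |radFn K x - ∫ φ, radFn K φ ∂(sphσ n)|) θ := by
        gcongr
        · exact hδ.1.le
        · linarith
end
end
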